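/- arXiv:1312.0539 — 16 statements merged into one kernel-verified Lean document; each statement's English description precedes it below -/
import Mathlib

section
/- Fix a countable set K partitioned into a nonempty subset K_W and a subset K_B, a generator matrix V on K, a stochastic matrix R on K, strictly positive arrival rates λ(n) > 0 (n ∈ ℕ₀) and service rates μ(n) > 0 (n ≥ 1). Let θ : K → [0,∞) be such that for every k ∈ K the families (θ(m)·R(m,k))_{m∈K_W} and (θ(m)·v(m,k))_{m∈K∖{k}} are summable, and define π(n,k) := (∏_{i=0}^{n−1} λ(i)/μ(i+1)) · θ(k) for (n,k) ∈ ℕ₀×K. Then π satisfies the global balance equations, i.e. for all (n,k) ∈ ℕ₀×K: π(n,k)·( 1[k∈K_W]·λ(n) + Σ_{m≠k} v(k,m) + 1[k∈K_W]·1[n>0]·μ(n) ) = 1[k∈K_W]·1[n>0]·λ(n−1)·π(n−1,k) + μ(n+1)·Σ_{m∈K_W} π(n+1,m)·R(m,k) + Σ_{m≠k} π(n,m)·v(m,k), if and only if θ·Q̃(n) = 0 for every n ∈ ℕ₀, i.e. Σ_{k∈K} θ(k)·q̃(n;k,m) = 0 for all n ∈ ℕ₀ and m ∈ K, where q̃(n;k,m)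 = λ(n)·R(k,m)·1[k∈K_W] + v(k,m) for k ≠ m and q̃(n;k,k) = −( 1[k∈K_W]·λ(n)·(1−R(k,k)) + Σ_{m≠k} v(k,m) ). -/
/-!
Write π(n,k) = c(n)·θ(k) with c(n) = ∏_{i<n} λ(i)/μ(i+1). The recursion μ(n+1)·c(n+1) = λ(n)·c(n)
turns the arrival term from level n-1 into the departure term at level n, and the departure term
from level n+1 into λ(n)·c(n) times the θ-weighted routing into k. What remains of the balance
equation at (n,k) is c(n) times the k-th entry of θ·Q̃(n), and c(n) ≠ 0.
-/

theorem hasSum_vecMul_tildeQ {K : Type*} (KW : Set K) [∀ k, Decidable (k ∈ KW)]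
    (v R q : K → K → ℝ) (l : ℝ)
    (hq_offdiag : ∀ k m, k ≠ m → q k m = l * R k m * (if k ∈ KW then 1 else 0) + v k m)
    (hq_diag : ∀ k, q k k = -((if k ∈ KW then (1:ℝ) else 0) * l * (1 - R k k)
        + ∑' j : {j : K // j ≠ k}, v k (j : K)))
    (θ : K → ℝ) (m : K)
    (hθR : Summable (fun j : KW => θ (j : K) * R (j : K) m))
    (hθv : Summable (fun j : {j : K // j ≠ m} => θ (j : K) * v (j : K) m)) :
    HasSum (fun k => θ k * q k m)
      (l * ∑' j : KW, θ (j : K) * R (j : K) m + ∑' j : {j : K // j ≠ m}, θ (j : K) * v (j : K) m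
        - θ m * ((if m ∈ KW then (1:ℝ) else 0) * l + ∑' j : {j : K // j ≠ m}, v m (j : K))) := by
  classical
  have hW : HasSum (KW.indicator fun j => θ j * R j m) _ :=
    hasSum_subtype_iff_indicator.mp hθR.hasSum
  have hV : HasSum ({j | j ≠ m}.indicator fun j => θ j * v j m) _ :=
    hasSum_subtype_iff_indicator.mp hθv.hasSum
  set D := (if m ∈ KW then (1:ℝ) else 0) * l + ∑' j : {j : K // j ≠ m}, v m (j : K)
  suffices hpt : ∀ k, θ k * q k m = l * KW.indicator (fun j => θ j * R j m) k
      + {j | j ≠ m}.indicator (fun j => θ j * v j m) k - (Pi.single m (θ m * D) : K → ℝ) k by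
    rw [funext hpt]
    exact ((hW.mul_left l).add hV).sub (hasSum_pi_single (α := ℝ) m (θ m * D))
  intro k
  rcases eq_or_ne k m with rfl | hk
  · simp only [hq_diag, Set.indicator_apply, Set.mem_ofPred_eq, ne_eq, not_true_eq_false,
      if_false, Pi.single_eq_same, D]
    split_ifs <;> ring
  · simp only [hq_offdiag _ _ hk, Set.indicator_apply, Set.mem_ofPred_eq, hk, ne_eq,
      not_false_eq_true, if_true, Pi.single_eq_of_ne hk]
    split_ifs <;> ring

theorem mul_prod_range_succ_div {F : Type*} [Field F] (f g : ℕ → F) (n : ℕ)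
    (hg : g (n + 1) ≠ 0) :
    g (n + 1) * ∏ i ∈ Finset.range (n + 1), f i / g (i + 1)
      = f n * ∏ i ∈ Finset.range n, f i / g (i + 1) := by
  rw [Finset.prod_range_succ]
  field_simp

theorem globalBalance_rhs_sub_lhs {K : Type*} (KW : Set K) [∀ k, Decidable (k ∈ KW)]
    (v R : K → K → ℝ) (lam mu c : ℕ → ℝ) (hc : ∀ n, mu (n + 1) * c (n + 1) = lam n * c n)
    (θ : K → ℝ) (π : ℕ → K → ℝ) (hπ : ∀ n k, π n k = c n * θ k) (n : ℕ) (k : K) :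
    (if k ∈ KW then (1:ℝ) else 0) * (if 0 < n then (1:ℝ) else 0) * lam (n - 1) * π (n - 1) k
        + mu (n + 1) * (∑' m : KW, π (n + 1) (m : K) * R (m : K) k)
        + ∑' m : {m : K // m ≠ k}, π n (m : K) * v (m : K) k
      - π n k * ((if k ∈ KW then (1:ℝ) else 0) * lam n
        + (∑' m : {m : K // m ≠ k}, v k (m : K))
        + (if k ∈ KW then (1:ℝ) else 0) * (if 0 < n then (1:ℝ) else 0) * mu n)
      = c n * (lam n * ∑' m : KW, θ (m : K) * R (m : K) k
        + ∑' m : {m : K // m ≠ k}, θ (m : K) * v (m : K) k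
        - θ k * ((if k ∈ KW then (1:ℝ) else 0) * lam n + ∑' m : {m : K // m ≠ k}, v k (m : K))) := by
  have hR : ∑' m : KW, π (n + 1) (m : K) * R (m : K) k
      = c (n + 1) * ∑' m : KW, θ (m : K) * R (m : K) k := by
    simp_rw [hπ, mul_assoc]
    exact tsum_mul_left
  have hv : ∑' m : {m : K // m ≠ k}, π n (m : K) * v (m : K) k
      = c n * ∑' m : {m : K // m ≠ k}, θ (m : K) * v (m : K) k := by
    simp_rw [hπ, mul_assoc]
    exact tsum_mul_left
  have hdeath : (if 0 < n then (1:ℝ) else 0) * lam (n - 1) * c (n - 1)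
      = (if 0 < n then (1:ℝ) else 0) * mu n * c n := by
    rcases n with _ | n
    · simp
    · simpa using (hc n).symm
  rw [hR, hv, hπ n k, hπ (n - 1) k]
  linear_combination (if k ∈ KW then (1:ℝ) else 0) * θ k * hdeath
    + (∑' m : KW, θ (m : K) * R (m : K) k) * hc n

theorem stmt_1_general {K : Type*}
    (KW : Set K) [∀ k, Decidable (k ∈ KW)]
    (v : K → K → ℝ)
    (R : K → K → ℝ)
    (lam : ℕ → ℝ) (hlam : ∀ n, 0 < lam n)
    (mu : ℕ → ℝ) (hmu : ∀ n, 1 ≤ n → 0 < mu n)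
    (θ : K → ℝ)
    (hθR_summable : ∀ k : K, Summable (fun m : KW => θ (m : K) * R (m : K) k))
    (hθv_summable : ∀ k : K,
      Summable (fun m : {m : K // m ≠ k} => θ (m : K) * v (m : K) k))
    (π : ℕ → K → ℝ)
    (hπ : ∀ n k, π n k = (∏ i ∈ Finset.range n, lam i / mu (i + 1)) * θ k)
    (q : ℕ → K → K → ℝ)
    (hq_offdiag : ∀ n k m, k ≠ m →
      q n k m = lam n * R k m * (if k ∈ KW then 1 else 0) + v k m)
    (hq_diag : ∀ n k,
      q n k k = -((if k ∈ KW then (1:ℝ) else 0) * lam n * (1 - R k k)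
        + ∑' m : {m : K // m ≠ k}, v k (m : K))) :
    (∀ (n : ℕ) (k : K),
        π n k * ((if k ∈ KW then (1:ℝ) else 0) * lam n
            + (∑' m : {m : K // m ≠ k}, v k (m : K))
            + (if k ∈ KW then (1:ℝ) else 0) * (if 0 < n then (1:ℝ) else 0) * mu n)
          = (if k ∈ KW then (1:ℝ) else 0) * (if 0 < n then (1:ℝ) else 0)
              * lam (n - 1) * π (n - 1) k
            + mu (n + 1) * (∑' m : KW, π (n + 1) (m : K) * R (m : K) k)
            + ∑' m : {m : K // m ≠ k}, π n (m : K) * v (m : K) k)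
    ↔ (∀ (n : ℕ) (m : K), ∑' k : K, θ k * q n k m = 0) := by
  have hc : ∀ n, mu (n + 1) * ∏ i ∈ Finset.range (n + 1), lam i / mu (i + 1)
      = lam n * ∏ i ∈ Finset.range n, lam i / mu (i + 1) := fun n =>
    mul_prod_range_succ_div lam mu n (hmu _ n.succ_pos).ne'
  have hc_ne : ∀ n, ∏ i ∈ Finset.range n, lam i / mu (i + 1) ≠ 0 := fun n =>
    (Finset.prod_pos fun i _ => div_pos (hlam i) (hmu _ i.succ_pos)).ne'
  refine forall₂_congr fun n k => ?_
  rw [eq_comm, ← sub_eq_zero, globalBalance_rhs_sub_lhs KW v R lam mu _ hc θ π hπ n k,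
    (hasSum_vecMul_tildeQ KW v R (q n) (lam n) (hq_offdiag n) (hq_diag n) θ k
      (hθR_summable k) (hθv_summable k)).tsum_eq, mul_eq_zero, or_iff_right (hc_ne n)]

/-- The product-form vector π(n,k) = (∏ λ(i)/μ(i+1))·θ(k) satisfies the
global balance equations of the loss system in a random environment if and only if
θ·Q̃(n) = 0 for every n. -/
theorem stmt_1 {K : Type*} [Countable K] [DecidableEq K]
    (KW KB : Set K) [∀ k, Decidable (k ∈ KW)]
    (hKW : KW.Nonempty)
    (hpart : ∀ k : K, k ∈ KW ↔ k ∉ KB)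
    (v : K → K → ℝ)
    (hv_offdiag : ∀ k m, k ≠ m → 0 ≤ v k m)
    (hv_summable : ∀ k, Summable (fun m : {m : K // m ≠ k} => v k (m : K)))
    (hv_diag : ∀ k, v k k = - ∑' m : {m : K // m ≠ k}, v k (m : K))
    (R : K → K → ℝ)
    (hR_nonneg : ∀ k m, 0 ≤ R k m)
    (hR_row : ∀ k, HasSum (fun m => R k m) 1)
    (lam : ℕ → ℝ) (hlam : ∀ n, 0 < lam n)
    (mu : ℕ → ℝ) (hmu : ∀ n, 1 ≤ n → 0 < mu n)
    (θ : K → ℝ) (hθ_nonneg : ∀ k, 0 ≤ θ k)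
    (hθR_summable : ∀ k : K, Summable (fun m : KW => θ (m : K) * R (m : K) k))
    (hθv_summable : ∀ k : K,
      Summable (fun m : {m : K // m ≠ k} => θ (m : K) * v (m : K) k))
    (π : ℕ → K → ℝ)
    (hπ : ∀ n k, π n k = (∏ i ∈ Finset.range n, lam i / mu (i + 1)) * θ k)
    (q : ℕ → K → K → ℝ)
    (hq_offdiag : ∀ n k m, k ≠ m →
      q n k m = lam n * R k m * (if k ∈ KW then 1 else 0) + v k m)
    (hq_diag : ∀ n k,
      q n k k = -((if k ∈ KW then (1:ℝ) else 0) * lam n * (1 - R k k)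
        + ∑' m : {m : K // m ≠ k}, v k (m : K))) :
    (∀ (n : ℕ) (k : K),
        π n k * ((if k ∈ KW then (1:ℝ) else 0) * lam n
            + (∑' m : {m : K // m ≠ k}, v k (m : K))
            + (if k ∈ KW then (1:ℝ) else 0) * (if 0 < n then (1:ℝ) else 0) * mu n)
          = (if k ∈ KW then (1:ℝ) else 0) * (if 0 < n then (1:ℝ) else 0)
              * lam (n - 1) * π (n - 1) k
            + mu (n + 1) * (∑' m : KW, π (n + 1) (m : K) * R (m : K) k)
            + ∑' m : {m : K // m ≠ k}, π n (m : K) * v (m : K) k)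
    ↔ (∀ (n : ℕ) (m : K), ∑' k : K, θ k * q n k m = 0) :=
  stmt_1_general KW v R lam hlam mu hmu θ hθR_summable hθv_summable π hπ q hq_offdiag hq_diag
end

section
/- Fix a countable set K partitioned into a nonempty subset K_W and a subset K_B, a generator matrix V on K, a stochastic matrix R on K, an integer N ≥ 0, and λ(n) > 0 for n ∈ {0,…,N}. For n ∈ {0,…,N+1} define the K×K matrix Q̃(n) by q̃(n;k,m) = λ(n)·R(k,m)·1[k∈K_W]·1[n≤N] + v(k,m) for k ≠ m and q̃(n;k,k) = −( 1[k∈K_W]·1[n≤N]·λ(n)·(1−R(k,k)) + Σ_{m≠k} v(k,m) ). Let θ : K → (0,∞) be strictly positive with Σ_{k∈K} θ(k) = 1 and such that for every k ∈ K the families (θ(m)·R(m,k))_{m∈K_W} and (θ(m)·v(m,k))_{m∈K∖{k}} are summable. Then the following are equivalent: (a) θ·Q̃(n) = 0 for every n ∈ {0,…,N+1}; (b) θ·V = 0 (i.e. Σ_{m≠k} θ(m)·v(m,k) = θ(k)·Σ_{m≠k} v(k,m) for all k), the set K_W is closed for R (i.e. Σ_{m∈K_W} R(k,m) = 1 for every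 k ∈ K_W), and the restriction of θ to K_W is stationary for the restricted matrix, i.e. Σ_{m∈K_W} θ(m)·R(m,k) = θ(k) for every k ∈ K_W. -/
/-!
Column `m` of `θ Q̃(n)` sums to `c(n) Φ(m) + Ψ(m)`, where `c(n) = λ(n) 1[n ≤ N]`, `Ψ = θ V`
and `Φ(m) = Σ_{k ∈ K_W} θ(k) R(k,m) - 1[m ∈ K_W] θ(m)`. Since `c(N+1) = 0` and `c(0) > 0`,
condition (a) says exactly `Ψ = 0` and `Φ = 0`. At `m ∉ K_W`, `Φ(m) = 0` is a vanishing sum of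
nonnegative terms with positive weights `θ(k)`, so `R(k,m) = 0` for all `k ∈ K_W`; for stochastic
rows this is closedness of `K_W`. At `m ∈ K_W`, `Φ(m) = 0` is the stationarity equation.
-/

open Set

section

variable {K : Type*}

/-- `(θ V)(m)` for a generator `V` recorded by its off-diagonal entries. -/
noncomputable def offDiagBalance (θ : K → ℝ) (v : K → K → ℝ) (m : K) : ℝ :=
  ∑' k : {k : K // k ≠ m}, θ k * v k m - θ m * ∑' k : {k : K // k ≠ m}, v m k

/-- `(θ (R - I))(m)` with `θ` and `R - I` restricted to `W`. -/
noncomputable def restrictedBalance (W : Set K) (θ : K → ℝ) (R : K → K → ℝ) (m : K) :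
    ℝ :=
  ∑' k : W, θ k * R k m - W.indicator θ m

lemma hasSum_mul_offDiagBalance {θ : K → ℝ} {v : K → K → ℝ} {m : K}
    (hv_diag : v m m = -∑' k : {k : K // k ≠ m}, v m k)
    (hs : Summable fun k : {k : K // k ≠ m} => θ k * v k m) :
    HasSum (fun k => θ k * v k m) (offDiagBalance θ v m) := by
  have h := HasSum.compl_add (s := {m}) (f := fun k => θ k * v k m) hs.hasSum
    (hasSum_singleton m fun k => θ k * v k m)
  rwa [hv_diag, mul_neg, ← sub_eq_add_neg] at h

lemma hasSum_restrictedBalance [DecidableEq K] {W : Set K} {θ : K → ℝ} {R : K → K → ℝ}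
    {m : K} (hs : Summable fun k : W => θ k * R k m) :
    HasSum (W.indicator (fun k => θ k * R k m) - Pi.single m (W.indicator θ m))
      (restrictedBalance W θ R m) :=
  (hasSum_subtype_iff_indicator.mp hs.hasSum).sub (hasSum_pi_single m _)

lemma hasSum_mul_col [DecidableEq K] {W : Set K} [∀ k, Decidable (k ∈ W)] {θ : K → ℝ}
    {R q v : K → K → ℝ} {c : ℝ}
    (hv_diag : ∀ k, v k k = -∑' m : {m : K // m ≠ k}, v k m)
    (hq_offdiag : ∀ k m, k ≠ m → q k m = c * (if k ∈ W then 1 else 0) * R k m + v k m)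
    (hq_diag : ∀ k, q k k = -(c * (if k ∈ W then 1 else 0) * (1 - R k k)
      + ∑' m : {m : K // m ≠ k}, v k m))
    {m : K} (hR : Summable fun k : W => θ k * R k m)
    (hv : Summable fun k : {k : K // k ≠ m} => θ k * v k m) :
    HasSum (fun k => θ k * q k m) (c * restrictedBalance W θ R m + offDiagBalance θ v m) := by
  have hsplit : ∀ k, θ k * q k m = c * (W.indicator (fun k => θ k * R k m) k
      - (Pi.single m (W.indicator θ m) : K → ℝ) k) + θ k * v k m := fun k => by
    rcases eq_or_ne k m with rfl | hkm
    · rw [hq_diag, ← neg_neg (∑' m : {m : K // m ≠ k}, v k m), ← hv_diag]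
      by_cases hk : k ∈ W <;> simp [hk]
      ring
    · rw [hq_offdiag k m hkm]
      by_cases hk : k ∈ W <;> simp [hk, hkm.symm]
      ring
  simp_rw [hsplit]
  exact ((hasSum_restrictedBalance hR).mul_left c).add
    (hasSum_mul_offDiagBalance (hv_diag m) hv)

lemma forall_mul_add_eq_zero_iff {ι : Type*} {p : ι → Prop} {c : ι → ℝ} {i j : ι}
    (hi : p i) (hci : c i = 0) (hj : p j) (hcj : c j ≠ 0) {a b : ℝ} :
    (∀ n, p n → c n * a + b = 0) ↔ b = 0 ∧ a = 0 := by
  refine ⟨fun h => ?_, fun ⟨hb, ha⟩ n _ => by simp [ha, hb]⟩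
  have hb : b = 0 := by simpa [hci] using h i hi
  exact ⟨hb, by simpa [hb, hcj] using h j hj⟩

lemma HasSum.tsum_subtype_eq_iff_of_nonneg {f : K → ℝ} {a : ℝ} (hf : HasSum f a)
    (h0 : ∀ k, 0 ≤ f k) (s : Set K) : ∑' k : s, f k = a ↔ ∀ k ∉ s, f k = 0 := by
  refine ⟨fun h => ?_, fun h => ?_⟩
  · have hcompl : HasSum (fun k : (sᶜ : Set K) => f k) 0 := by
      have := hf.summable.tsum_subtype_add_tsum_subtype_compl s
      rw [h, hf.tsum_eq, add_eq_left] at this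
      exact this ▸ (hf.summable.subtype _).hasSum
    intro k hk
    exact congrFun ((hasSum_zero_iff_of_nonneg (f := fun k : (sᶜ : Set K) => f k)
      fun k => h0 k).mp hcompl) ⟨k, hk⟩
  · have hsupp : Function.support f ⊆ s := fun k hk => by_contra fun hks => hk (h k hks)
    exact ((hasSum_subtype_iff_of_support_subset hsupp).mpr hf).tsum_eq

lemma restrictedBalance_eq_zero_iff {W : Set K} {θ : K → ℝ} {R : K → K → ℝ}
    (hθ : ∀ k, 0 < θ k) (hR_nonneg : ∀ k m, 0 ≤ R k m) (hR_row : ∀ k, HasSum (R k) 1)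
    (hs : ∀ m, Summable fun k : W => θ k * R k m) :
    (∀ m, restrictedBalance W θ R m = 0) ↔
      (∀ k ∈ W, ∑' m : W, R k m = 1) ∧ ∀ k ∈ W, ∑' m : W, θ m * R m k = θ k := by
  have hout : ∀ m ∉ W, restrictedBalance W θ R m = 0 ↔ ∀ k ∈ W, R k m = 0 := by
    intro m hm
    rw [restrictedBalance, indicator_of_notMem hm, sub_zero, ← (hs m).hasSum_iff,
      hasSum_zero_iff_of_nonneg fun k : W => mul_nonneg (hθ k).le (hR_nonneg k m), funext_iff]
    simp [(hθ _).ne', Subtype.forall]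
  have hin : ∀ m ∈ W, restrictedBalance W θ R m = 0 ↔ ∑' k : W, θ k * R k m = θ m :=
    fun m hm => by rw [restrictedBalance, indicator_of_mem hm, sub_eq_zero]
  have hclosed : ∀ k, ∑' m : W, R k m = 1 ↔ ∀ m ∉ W, R k m = 0 :=
    fun k => (hR_row k).tsum_subtype_eq_iff_of_nonneg (hR_nonneg k) W
  constructor
  · intro h
    exact ⟨fun k hk => (hclosed k).2 fun m hm => (hout m hm).1 (h m) k hk,
      fun m hm => (hin m hm).1 (h m)⟩
  · rintro ⟨hcl, hst⟩ m
    by_cases hm : m ∈ W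
    · exact (hin m hm).2 (hst m hm)
    · exact (hout m hm).2 fun k hk => (hclosed k).1 (hcl k hk) m hm

end

theorem stmt_2_general {K : Type*}
    (KW : Set K) [∀ k, Decidable (k ∈ KW)]
    (v : K → K → ℝ)
    (hv_diag : ∀ k, v k k = - ∑' m : {m : K // m ≠ k}, v k (m : K))
    (R : K → K → ℝ)
    (hR_nonneg : ∀ k m, 0 ≤ R k m)
    (hR_row : ∀ k, HasSum (fun m => R k m) 1)
    (N : ℕ)
    (lam : ℕ → ℝ) (hlam : ∀ n, n ≤ N → 0 < lam n)
    (θ : K → ℝ) (hθ_pos : ∀ k, 0 < θ k)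
    (hθR_summable : ∀ k : K, Summable (fun m : KW => θ (m : K) * R (m : K) k))
    (hθv_summable : ∀ k : K,
      Summable (fun m : {m : K // m ≠ k} => θ (m : K) * v (m : K) k))
    (q : ℕ → K → K → ℝ)
    (hq_offdiag : ∀ n k m, k ≠ m →
      q n k m = lam n * R k m * (if k ∈ KW then 1 else 0)
        * (if n ≤ N then 1 else 0) + v k m)
    (hq_diag : ∀ n k,
      q n k k = -((if k ∈ KW then (1:ℝ) else 0) * (if n ≤ N then (1:ℝ) else 0)
          * lam n * (1 - R k k)
        + ∑' m : {m : K // m ≠ k}, v k (m : K))) :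
    (∀ n, n ≤ N + 1 → ∀ m : K, ∑' k : K, θ k * q n k m = 0)
    ↔ ((∀ k : K, ∑' m : {m : K // m ≠ k}, θ (m : K) * v (m : K) k
          = θ k * ∑' m : {m : K // m ≠ k}, v k (m : K))
        ∧ (∀ k ∈ KW, ∑' m : KW, R k (m : K) = 1)
        ∧ (∀ k ∈ KW, ∑' m : KW, θ (m : K) * R (m : K) k = θ k)) := by
  classical
  set c : ℕ → ℝ := fun n => lam n * if n ≤ N then 1 else 0
  have hcol : ∀ n m, ∑' k, θ k * q n k m
      = c n * restrictedBalance KW θ R m + offDiagBalance θ v m := fun n m =>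
    (hasSum_mul_col hv_diag (fun k m hkm => by rw [hq_offdiag n k m hkm]; ring)
      (fun k => by rw [hq_diag n k]; ring) (hθR_summable m) (hθv_summable m)).tsum_eq
  have hsplit : ∀ m,
      (∀ n, n ≤ N + 1 → c n * restrictedBalance KW θ R m + offDiagBalance θ v m = 0) ↔
        offDiagBalance θ v m = 0 ∧ restrictedBalance KW θ R m = 0 := fun m =>
    forall_mul_add_eq_zero_iff (p := (· ≤ N + 1)) le_rfl (by simp [c]) (Nat.zero_le _)
      (by simp [c, (hlam 0 (Nat.zero_le N)).ne'])
  calc (∀ n, n ≤ N + 1 → ∀ m, ∑' k, θ k * q n k m = 0)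
      ↔ ∀ m, ∀ n, n ≤ N + 1 →
          c n * restrictedBalance KW θ R m + offDiagBalance θ v m = 0 := by
        simp only [hcol]; exact ⟨fun h m n hn => h n hn m, fun h n hn m => h m n hn⟩
    _ ↔ (∀ m, offDiagBalance θ v m = 0) ∧ ∀ m, restrictedBalance KW θ R m = 0 := by
        simp only [hsplit, forall_and]
    _ ↔ _ := by
        rw [restrictedBalance_eq_zero_iff hθ_pos hR_nonneg hR_row hθR_summable]
        simp only [offDiagBalance, sub_eq_zero]

/-- For the finite-capacity loss system, θ·Q̃(n) = 0 for all n ∈ {0,…,N+1}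
iff θ·V = 0, K_W is closed for R, and θ restricted to K_W is stationary for R
restricted to K_W. -/
theorem stmt_2 {K : Type*} [Countable K] [DecidableEq K]
    (KW KB : Set K) [∀ k, Decidable (k ∈ KW)]
    (hKW : KW.Nonempty)
    (hpart : ∀ k : K, k ∈ KW ↔ k ∉ KB)
    (v : K → K → ℝ)
    (hv_offdiag : ∀ k m, k ≠ m → 0 ≤ v k m)
    (hv_summable : ∀ k, Summable (fun m : {m : K // m ≠ k} => v k (m : K)))
    (hv_diag : ∀ k, v k k = - ∑' m : {m : K // m ≠ k}, v k (m : K))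
    (R : K → K → ℝ)
    (hR_nonneg : ∀ k m, 0 ≤ R k m)
    (hR_row : ∀ k, HasSum (fun m => R k m) 1)
    (N : ℕ)
    (lam : ℕ → ℝ) (hlam : ∀ n, n ≤ N → 0 < lam n)
    (θ : K → ℝ) (hθ_pos : ∀ k, 0 < θ k) (hθ_sum : HasSum θ 1)
    (hθR_summable : ∀ k : K, Summable (fun m : KW => θ (m : K) * R (m : K) k))
    (hθv_summable : ∀ k : K,
      Summable (fun m : {m : K // m ≠ k} => θ (m : K) * v (m : K) k))
    (q : ℕ → K → K → ℝ)
    (hq_offdiag : ∀ n k m, k ≠ m →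
      q n k m = lam n * R k m * (if k ∈ KW then 1 else 0)
        * (if n ≤ N then 1 else 0) + v k m)
    (hq_diag : ∀ n k,
      q n k k = -((if k ∈ KW then (1:ℝ) else 0) * (if n ≤ N then (1:ℝ) else 0)
          * lam n * (1 - R k k)
        + ∑' m : {m : K // m ≠ k}, v k (m : K))) :
    (∀ n, n ≤ N + 1 → ∀ m : K, ∑' k : K, θ k * q n k m = 0)
    ↔ ((∀ k : K, ∑' m : {m : K // m ≠ k}, θ (m : K) * v (m : K) k
          = θ k * ∑' m : {m : K // m ≠ k}, v k (m : K))
        ∧ (∀ k ∈ KW, ∑' m : KW, R k (m : K) = 1)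
        ∧ (∀ k ∈ KW, ∑' m : KW, θ (m : K) * R (m : K) k = θ k)) :=
  stmt_2_general KW v hv_diag R hR_nonneg hR_row N lam hlam θ hθ_pos hθR_summable hθv_summable q
    hq_offdiag hq_diag
end

section
/- Fix a countable set K partitioned into a nonempty subset K_W and a subset K_B, a generator matrix V on K, a stochastic matrix R on K, and an integer N ≥ 0. Suppose θ : K → (0,∞) is strictly positive with Σ_{k∈K} θ(k) = 1, the families (θ(m)·R(m,k))_{m∈K_W} and (θ(m)·v(m,k))_{m∈K∖{k}} are summable for each k, and θ satisfies: θ·V = 0, Σ_{m∈K_W} R(k,m) = 1 for every k ∈ K_W, and Σ_{m∈K_W} θ(m)·R(m,k) = θ(k) for every k ∈ K_W. Then for EVERY choice of strictly positive rates λ(0),…,λ(N) > 0 the same θ satisfies θ·Q̃(n) = 0 for all n ∈ {0,…,N+1}, where q̃(n;k,m) = λ(n)·R(k,m)·1[k∈K_W]·1[n≤N] + v(k,m) for k ≠ m and q̃(n;k,k) = −( 1[k∈K_W]·1[n≤N]·λ(n)·(1−R(k,k)) + Σ_{m≠k} v(k,m) ). In particular the environment's stationary vector θ does not depend on the arrival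 rates λ(n) (nor on any service rates). -/
lemma hasSum_split {K : Type*} [DecidableEq K] (m : K) (u : K → ℝ)
    (hu : Summable fun k : {k : K // k ≠ m} => u (k : K)) :
    HasSum u (u m + ∑' k : {k : K // k ≠ m}, u (k : K)) := by
  have hu' : Summable (fun k : ({m}ᶜ : Set K) => u (k : K)) := hu
  have hind : Summable (({m}ᶜ : Set K).indicator u) :=
    (summable_subtype_iff_indicator (s := ({m}ᶜ : Set K)) (f := u)).mp hu'
  have h1 : HasSum (({m}ᶜ : Set K).indicator u) (∑' k : {k : K // k ≠ m}, u (k : K)) := by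
    have h2 := hind.hasSum
    have h3 : ∑' k : ({m}ᶜ : Set K), u (k : K) = ∑' x, (({m}ᶜ : Set K).indicator u) x :=
      tsum_subtype _ _
    rw [← h3] at h2
    exact h2
  have h2 : HasSum (fun x => if x = m then u m else 0) (u m) := hasSum_ite_eq m (u m)
  have h3 := h2.add h1
  have h4 : (fun x => (if x = m then u m else 0) + (({m}ᶜ : Set K).indicator u) x) = u := by
    funext x
    by_cases hx : x = m <;> simp [hx, Set.indicator_apply]
  rwa [h4] at h3


/-- If θ solves θ·V = 0, K_W is closed for R and θ|K_W is stationary for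
R|K_W, then for EVERY choice of strictly positive rates λ(0),…,λ(N) the same θ
satisfies θ·Q̃(n) = 0 for all n ∈ {0,…,N+1}; the environment's stationary vector does
not depend on the arrival (or service) rates. -/
theorem stmt_3 {K : Type*} [Countable K] [DecidableEq K]
    (KW KB : Set K) [∀ k, Decidable (k ∈ KW)]
    (hKW : KW.Nonempty)
    (hpart : ∀ k : K, k ∈ KW ↔ k ∉ KB)
    (v : K → K → ℝ)
    (hv_offdiag : ∀ k m, k ≠ m → 0 ≤ v k m)
    (hv_summable : ∀ k, Summable (fun m : {m : K // m ≠ k} => v k (m : K)))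
    (hv_diag : ∀ k, v k k = - ∑' m : {m : K // m ≠ k}, v k (m : K))
    (R : K → K → ℝ)
    (hR_nonneg : ∀ k m, 0 ≤ R k m)
    (hR_row : ∀ k, HasSum (fun m => R k m) 1)
    (N : ℕ)
    (θ : K → ℝ) (hθ_pos : ∀ k, 0 < θ k) (hθ_sum : HasSum θ 1)
    (hθR_summable : ∀ k : K, Summable (fun m : KW => θ (m : K) * R (m : K) k))
    (hθv_summable : ∀ k : K,
      Summable (fun m : {m : K // m ≠ k} => θ (m : K) * v (m : K) k))
    (hθV : ∀ k : K, ∑' m : {m : K // m ≠ k}, θ (m : K) * v (m : K) k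
      = θ k * ∑' m : {m : K // m ≠ k}, v k (m : K))
    (hKW_closed : ∀ k ∈ KW, ∑' m : KW, R k (m : K) = 1)
    (hθ_stat : ∀ k ∈ KW, ∑' m : KW, θ (m : K) * R (m : K) k = θ k) :
    ∀ lam : ℕ → ℝ, (∀ n, n ≤ N → 0 < lam n) →
      ∀ n, n ≤ N + 1 → ∀ m : K,
        ∑' k : K, θ k *
          (if k = m then
            -((if k ∈ KW then (1:ℝ) else 0) * (if n ≤ N then (1:ℝ) else 0)
                * lam n * (1 - R k k)
              + ∑' m' : {m' : K // m' ≠ k}, v k (m' : K))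
          else lam n * R k m * (if k ∈ KW then 1 else 0)
                * (if n ≤ N then 1 else 0) + v k m)
        = 0 := by
  intro lam hlam n hn m
  -- R k m' = 0 for k ∈ KW, m' ∉ KW
  have hR0 : ∀ k ∈ KW, ∀ m', m' ∉ KW → R k m' = 0 := by
    intro k hk m' hm'
    have hsum : Summable (R k) := (hR_row k).summable
    have h1 : Summable (fun x : KW => R k (x : K)) := hsum.subtype _
    have h2 : Summable (fun x : ↥KWᶜ => R k (x : K)) := hsum.subtype _
    have hadd := Summable.tsum_add_tsum_compl (s := KW) h1 h2
    rw [hKW_closed k hk, (hR_row k).tsum_eq] at hadd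
    have hc : ∑' x : ↥KWᶜ, R k (x : K) = 0 := by linarith
    have hle : R k m' ≤ ∑' x : ↥KWᶜ, R k (x : K) :=
      Summable.le_tsum h2 ⟨m', hm'⟩ (fun _ _ => hR_nonneg k _)
    have := hR_nonneg k m'
    linarith [hle.trans hc.le]
  set cN : ℝ := if n ≤ N then (1:ℝ) else 0 with hcN
  set S : ℝ := ∑' m' : {m' : K // m' ≠ m}, v m (m' : K) with hS
  set h : K → ℝ := fun k => θ k * R k m * (if k ∈ KW then 1 else 0) with hh_def
  have hh_ind : h = KW.indicator (fun k => θ k * R k m) := by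
    funext k
    by_cases hk : k ∈ KW <;> simp [hh_def, hk, Set.indicator_apply]
  have hh_summ : Summable h := by
    rw [hh_ind]
    exact (summable_subtype_iff_indicator (s := KW) (f := fun k => θ k * R k m)).mp
      (hθR_summable m)
  set Th : ℝ := ∑' k, h k with hTh_def
  have hTh_mem : m ∈ KW → Th = θ m := by
    intro hm
    have : ∑' k : KW, θ (k : K) * R (k : K) m = ∑' k, h k := by
      rw [hh_ind]; exact tsum_subtype KW (fun k => θ k * R k m)
    rw [hTh_def, ← this, hθ_stat m hm]
  have hTh_nmem : m ∉ KW → Th = 0 := by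
    intro hm
    have hz : h = 0 := by
      funext k
      by_cases hk : k ∈ KW
      · simp [hh_def, hk, hR0 k hk m hm]
      · simp [hh_def, hk]
    rw [hTh_def, hz]; simp
  -- w k = θ k * v k m has sum 0
  set w : K → ℝ := fun k => θ k * v k m with hw_def
  have hw0 : HasSum w 0 := by
    have := hasSum_split m w (hθv_summable m)
    have hval : w m + ∑' k : {k : K // k ≠ m}, w (k : K) = 0 := by
      have h1 : ∑' k : {k : K // k ≠ m}, w (k : K) = θ m * S := hθV m
      rw [h1, hw_def]
      simp only [hv_diag m, ← hS]
      ring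
    rwa [hval] at this
  set g : K → ℝ := fun k => lam n * cN * h k + w k with hg_def
  have hg : HasSum g (lam n * cN * Th + 0) := (hh_summ.hasSum.mul_left _).add hw0
  set fm : ℝ := θ m * (-((if m ∈ KW then (1:ℝ) else 0) * cN * lam n * (1 - R m m) + S))
    with hfm_def
  have hf : HasSum (fun k => θ k *
          (if k = m then
            -((if k ∈ KW then (1:ℝ) else 0) * (if n ≤ N then (1:ℝ) else 0)
                * lam n * (1 - R k k)
              + ∑' m' : {m' : K // m' ≠ k}, v k (m' : K))
          else lam n * R k m * (if k ∈ KW then 1 else 0)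
                * (if n ≤ N then 1 else 0) + v k m))
      (lam n * cN * Th + 0 + (fm - g m)) := by
    have := hg.add (hasSum_ite_eq m (fm - g m))
    convert this using 1
    funext k
    by_cases hk : k = m
    · subst hk
      simp only [if_pos rfl, if_true, hg_def, hfm_def, hw_def, hh_def, ← hcN, ← hS]
      ring
    · simp only [hk, if_false, hg_def, hw_def, hh_def, ← hcN]
      ring
  rw [hf.tsum_eq]
  simp only [hg_def, hfm_def, hw_def, hh_def]
  by_cases hm : m ∈ KW
  · rw [hTh_mem hm]
    by_cases hnN : n ≤ N
    · simp only [hcN, hnN, if_true, hm, hv_diag m, ← hS]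
      ring
    · simp only [hcN, hnN, if_false, hm, if_true, hv_diag m, ← hS]
      ring
  · rw [hTh_nmem hm]
    simp only [hm, if_false, hv_diag m, ← hS]
    ring
end

section
/- Let λ > 0, β > 0, integers r ≥ 1, L ≥ 1 and S > r, weights b(1),…,b(L) ≥ 0 with Σ_{i=1}^{L} b(i) = 1, and a constant c > 0. Define θ(k) := c for k ∈ {r+1,…,S}; θ(j,ℓ) := c·(λ/(λ+β))^{r+1−j} · Σ_{i=ℓ}^{L} b(i)·(β/(λ+β))^{i−ℓ} · binom(i−ℓ+r−j, r−j) for 1 ≤ j ≤ r and 1 ≤ ℓ ≤ L; and θ(0,ℓ) := c·(λ/(λ+β))^{r}·(λ/β) · Σ_{i=ℓ}^{L} ( Σ_{g=i}^{L} b(g) )·(β/(λ+β))^{i−ℓ} · binom(i−ℓ+r−1, r−1) for 1 ≤ ℓ ≤ L. Then these numbers satisfy the balance equations of the M/M/1 queueing-inventory system under (r,S)-policy with phase-type lead times: (1) λ·θ(S) = β·Σ_{j=0}^{r} θ(j,1); (2) θ(k) = θ(k+1) for r+1 ≤ k ≤ S−1; (3) (λ+β)·θ(r,ℓ) = λ·b(ℓ)·θ(r+1)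 + β·θ(r,ℓ+1) for 1 ≤ ℓ ≤ L−1; (4) (λ+β)·θ(r,L) = λ·b(L)·θ(r+1); (5) (λ+β)·θ(j,L) = λ·θ(j+1,L) for 1 ≤ j ≤ r−1; (6) (λ+β)·θ(j,ℓ) = λ·θ(j+1,ℓ) + β·θ(j,ℓ+1) for 1 ≤ j ≤ r−1 and 1 ≤ ℓ ≤ L−1; (7) β·θ(0,ℓ) = λ·θ(1,ℓ) + β·θ(0,ℓ+1) for 1 ≤ ℓ ≤ L−1; (8) β·θ(0,L) = λ·θ(1,L). -/
/-!
Put `p = λ/(λ+β)` and `q = β/(λ+β)`. Every `θ(j, ℓ)` is `c·pᵉ` times a sum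
`Φₘ(w, ℓ) = ∑ₙ w(ℓ+n) qⁿ C(n+m, m)`, and Pascal's rule gives
`Φₘ₊₁(w, ℓ) = Φₘ(w, ℓ) + q Φₘ₊₁(w, ℓ+1)`; together with `(λ+β)p = λ` and `λq = βp` this is the
local balance (3)–(8), the last-phase equations being the case `ℓ = L` once `Φ` is extended by zero.
Equation (1) is the global balance: summing the local equations over the phases telescopes, and
summing the results over the inventory levels telescopes again, to `λc` since `∑ b = 1`.
-/

open Finset

section PhaseSum

variable {R : Type*} [CommSemiring R] (L : ℕ) (q : R)

/-- `∑ i ∈ Icc ℓ L, w i * q ^ (i - ℓ) * C(i - ℓ + m, m)`, indexed by the offset `n = i - ℓ` to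
avoid truncated subtraction; it vanishes for `L < ℓ`. -/
def phaseSum (w : ℕ → R) (m ℓ : ℕ) : R :=
  ∑ n ∈ range (L + 1 - ℓ), w (ℓ + n) * q ^ n * ((n + m).choose m : R)

variable {L q}

lemma phaseSum_eq_sum_Icc (w : ℕ → R) (m ℓ : ℕ) :
    phaseSum L q w m ℓ = ∑ i ∈ Icc ℓ L, w i * q ^ (i - ℓ) * ((i - ℓ + m).choose m : R) := by
  rw [phaseSum, ← Ico_add_one_right_eq_Icc, sum_Ico_eq_sum_range]
  refine sum_congr rfl fun n _ => ?_
  simp only [Nat.add_sub_cancel_left]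

@[simp]
lemma phaseSum_succ_self (w : ℕ → R) (m : ℕ) : phaseSum L q w m (L + 1) = 0 := by
  simp [phaseSum]

lemma phaseSum_zero_eq_add (w : ℕ → R) {ℓ : ℕ} (hℓ : ℓ ≤ L) :
    phaseSum L q w 0 ℓ = w ℓ + q * phaseSum L q w 0 (ℓ + 1) := by
  simp only [phaseSum, Nat.choose_zero_right, Nat.cast_one, mul_one, Nat.add_sub_add_right,
    show L + 1 - ℓ = L - ℓ + 1 by omega, sum_range_succ', mul_sum]
  rw [add_comm]
  simp only [add_zero, pow_zero, mul_one, pow_succ]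
  congr 1
  refine sum_congr rfl fun n _ => ?_
  rw [show ℓ + (n + 1) = ℓ + 1 + n by omega]
  ring

lemma phaseSum_succ_eq_add (w : ℕ → R) (m ℓ : ℕ) :
    phaseSum L q w (m + 1) ℓ = phaseSum L q w m ℓ + q * phaseSum L q w (m + 1) (ℓ + 1) := by
  simp only [phaseSum, Nat.add_sub_add_right]
  rcases Nat.lt_or_ge L ℓ with h | h
  · simp [show L + 1 - ℓ = 0 by omega, show L - ℓ = 0 by omega]
  rw [show L + 1 - ℓ = L - ℓ + 1 by omega, sum_range_succ', sum_range_succ', mul_sum,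
    add_right_comm, ← sum_add_distrib]
  simp only [zero_add, Nat.choose_self]
  congr 1
  refine sum_congr rfl fun n _ => ?_
  rw [show n + 1 + (m + 1) = n + 1 + m + 1 by omega, Nat.choose_succ_succ',
    show ℓ + (n + 1) = ℓ + 1 + n by omega, show n + 1 + m = n + (m + 1) by omega]
  push_cast
  ring

lemma phaseSum_eq_add_of_eq_add {v w : ℕ → R} (h : ∀ i ≤ L, w i = v i + w (i + 1))
    (hw : w (L + 1) = 0) (m ℓ : ℕ) :
    phaseSum L q w m ℓ = phaseSum L q v m ℓ + phaseSum L q w m (ℓ + 1) := by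
  simp only [phaseSum, Nat.add_sub_add_right]
  rcases Nat.lt_or_ge L ℓ with hℓ | hℓ
  · simp [show L + 1 - ℓ = 0 by omega, show L - ℓ = 0 by omega]
  have hsplit : ∀ n ∈ range (L + 1 - ℓ), w (ℓ + n) = v (ℓ + n) + w (ℓ + 1 + n) := fun n hn => by
    rw [h _ (by simp at hn; omega), add_right_comm]
  rw [sum_congr rfl fun n hn => by rw [hsplit n hn], show L + 1 - ℓ = L - ℓ + 1 by omega]
  simp only [add_mul, sum_add_distrib, sum_range_succ _ (L - ℓ),
    show ℓ + 1 + (L - ℓ) = L + 1 by omega, hw, zero_mul, add_zero]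
  ring

end PhaseSum

lemma eq_sum_Icc_of_eq_add_succ {M : Type*} [AddCommGroup M] {f g : ℕ → M} {m n : ℕ}
    (hmn : m ≤ n + 1) (h : ∀ i ∈ Icc m n, f i = g i + f (i + 1)) (hn : f (n + 1) = 0) :
    f m = ∑ i ∈ Icc m n, g i := by
  have hg : ∀ i ∈ Ico m (n + 1), g i = -(f (i + 1) - f i) := fun i hi => by
    rw [h i (by simpa [Nat.lt_succ_iff] using hi)]; abel
  rw [← Ico_add_one_right_eq_Icc, sum_congr rfl hg, sum_neg_distrib, sum_Ico_sub f hmn, hn]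
  abel

section Balance

variable (lam beta c : ℝ) (r L : ℕ) (b : ℕ → ℝ)

/-- `θ(j, ℓ)` for `1 ≤ j ≤ r`; through `phaseSum` it vanishes for `L < ℓ`. -/
noncomputable def stockWeight (j ℓ : ℕ) : ℝ :=
  c * (lam / (lam + beta)) ^ (r + 1 - j) * phaseSum L (beta / (lam + beta)) b (r - j) ℓ

noncomputable def stockoutWeight (ℓ : ℕ) : ℝ :=
  c * (lam / (lam + beta)) ^ r * (lam / beta) *
    phaseSum L (beta / (lam + beta)) (fun i => ∑ g ∈ Icc i L, b g) (r - 1) ℓ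

variable {r}

lemma stockWeight_eq_sum {j : ℕ} (hj : j ≤ r) (ℓ : ℕ) :
    stockWeight lam beta c r L b j ℓ = c * (lam / (lam + beta)) ^ (r + 1 - j) *
      ∑ i ∈ Icc ℓ L, b i * (beta / (lam + beta)) ^ (i - ℓ) *
        (Nat.choose (i - ℓ + r - j) (r - j) : ℝ) := by
  simp only [stockWeight, phaseSum_eq_sum_Icc, Nat.add_sub_assoc hj]

lemma stockoutWeight_eq_sum (hr : 1 ≤ r) (ℓ : ℕ) :
    stockoutWeight lam beta c r L b ℓ = c * (lam / (lam + beta)) ^ r * (lam / beta) *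
      ∑ i ∈ Icc ℓ L, (∑ g ∈ Icc i L, b g) * (beta / (lam + beta)) ^ (i - ℓ) *
        (Nat.choose (i - ℓ + r - 1) (r - 1) : ℝ) := by
  simp only [stockoutWeight, phaseSum_eq_sum_Icc, Nat.add_sub_assoc hr]

@[simp]
lemma stockWeight_succ_last (j : ℕ) : stockWeight lam beta c r L b j (L + 1) = 0 := by
  simp [stockWeight]

@[simp]
lemma stockoutWeight_succ_last : stockoutWeight lam beta c r L b (L + 1) = 0 := by
  simp [stockoutWeight]

variable {lam beta}

lemma stockWeight_balance_top (hlb : lam + beta ≠ 0) {ℓ : ℕ} (hℓ : ℓ ≤ L) :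
    (lam + beta) * stockWeight lam beta c r L b r ℓ =
      lam * b ℓ * c + beta * stockWeight lam beta c r L b r (ℓ + 1) := by
  simp only [stockWeight, Nat.sub_self, Nat.add_sub_cancel_left, pow_one,
    phaseSum_zero_eq_add b hℓ]
  field_simp

lemma stockWeight_balance (hlb : lam + beta ≠ 0) {j : ℕ} (hj : j < r) (ℓ : ℕ) :
    (lam + beta) * stockWeight lam beta c r L b j ℓ =
      lam * stockWeight lam beta c r L b (j + 1) ℓ +
        beta * stockWeight lam beta c r L b j (ℓ + 1) := by
  obtain ⟨k, rfl⟩ : ∃ k, r = j + 1 + k := ⟨r - (j + 1), by omega⟩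
  simp only [stockWeight, show j + 1 + k + 1 - j = k + 2 by omega,
    show j + 1 + k + 1 - (j + 1) = k + 1 by omega, show j + 1 + k - j = k + 1 by omega,
    show j + 1 + k - (j + 1) = k by omega, phaseSum_succ_eq_add b k ℓ]
  set p := lam / (lam + beta)
  set q := beta / (lam + beta)
  have hp : (lam + beta) * p = lam := mul_div_cancel₀ lam hlb
  have hq : lam * q = beta * p := by simp only [p, q, mul_div_assoc']; ring
  linear_combination
    c * p ^ (k + 1) * (phaseSum L q b k ℓ + q * phaseSum L q b (k + 1) (ℓ + 1)) * hp +
      c * p ^ (k + 1) * phaseSum L q b (k + 1) (ℓ + 1) * hq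

lemma stockoutWeight_balance (hbeta : beta ≠ 0) (ℓ : ℕ) :
    beta * stockoutWeight lam beta c r L b ℓ =
      lam * stockWeight lam beta c r L b 1 ℓ + beta * stockoutWeight lam beta c r L b (ℓ + 1) := by
  have htail : ∀ i ≤ L, ∑ g ∈ Icc i L, b g = b i + ∑ g ∈ Icc (i + 1) L, b g := fun i hi => by
    rw [Icc_eq_cons_Ioc hi, sum_cons, ← Icc_add_one_left_eq_Ioc]
  simp only [stockoutWeight, stockWeight, Nat.add_sub_cancel,
    phaseSum_eq_add_of_eq_add htail (by simp) (r - 1) ℓ]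
  field_simp

lemma stockWeight_balance_top_last (hlb : lam + beta ≠ 0) :
    (lam + beta) * stockWeight lam beta c r L b r L = lam * b L * c := by
  simpa using stockWeight_balance_top c L b hlb le_rfl

lemma stockWeight_balance_last (hlb : lam + beta ≠ 0) {j : ℕ} (hj : j < r) :
    (lam + beta) * stockWeight lam beta c r L b j L =
      lam * stockWeight lam beta c r L b (j + 1) L := by
  simpa using stockWeight_balance c L b hlb hj L

lemma stockoutWeight_balance_last (hbeta : beta ≠ 0) :
    beta * stockoutWeight lam beta c r L b L = lam * stockWeight lam beta c r L b 1 L := by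
  simpa using stockoutWeight_balance c L b hbeta L

end Balance

section GlobalBalance

variable {lam beta : ℝ} (c : ℝ) {r : ℕ} (L : ℕ) {b : ℕ → ℝ}

lemma stockWeight_global_balance (hlb : lam + beta ≠ 0) (hbeta : beta ≠ 0) (hr : 1 ≤ r)
    (hb : ∑ i ∈ Icc 1 L, b i = 1) :
    beta * (stockoutWeight lam beta c r L b 1 + ∑ j ∈ Icc 1 r, stockWeight lam beta c r L b j 1) =
      lam * c := by
  set x := stockWeight lam beta c r L b
  set y := stockoutWeight lam beta c r L b
  set T := fun j => ∑ ℓ ∈ Icc 1 L, x j ℓ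
  have hy : beta * y 1 = lam * T 1 := by
    rw [mul_sum]
    exact eq_sum_Icc_of_eq_add_succ (f := fun ℓ => beta * y ℓ) (by omega)
      (fun ℓ _ => stockoutWeight_balance c L b hbeta ℓ) (by simp [y])
  have htop : beta * x r 1 = lam * c - lam * T r := by
    have h := eq_sum_Icc_of_eq_add_succ (f := fun ℓ => beta * x r ℓ)
      (g := fun ℓ => lam * b ℓ * c - lam * x r ℓ) (m := 1) (n := L) (by omega)
      (fun ℓ hℓ => by
        linear_combination stockWeight_balance_top c L b hlb (mem_Icc.mp hℓ).2) (by simp [x])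
    rw [h, sum_sub_distrib, ← sum_mul, ← mul_sum, hb, mul_sum]
    ring
  have hlevel : ∀ j ∈ Ico 1 r, beta * x j 1 = lam * T (j + 1) - lam * T j := fun j hj => by
    have h := eq_sum_Icc_of_eq_add_succ (f := fun ℓ => beta * x j ℓ)
      (g := fun ℓ => lam * x (j + 1) ℓ - lam * x j ℓ) (m := 1) (n := L) (by omega)
      (fun ℓ _ => by linear_combination stockWeight_balance c L b hlb (mem_Ico.mp hj).2 ℓ)
      (by simp [x])
    rw [h, sum_sub_distrib, ← mul_sum, ← mul_sum]
  calc beta * (y 1 + ∑ j ∈ Icc 1 r, x j 1)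
      = beta * y 1 + ∑ j ∈ Ico 1 r, beta * x j 1 + beta * x r 1 := by
        rw [← Ico_add_one_right_eq_Icc, sum_Ico_succ_top hr, mul_add, mul_add, mul_sum, add_assoc]
    _ = lam * T 1 + (lam * T r - lam * T 1) + (lam * c - lam * T r) := by
        rw [hy, sum_congr rfl hlevel, sum_Ico_sub (fun j => lam * T j) hr, htop]
    _ = lam * c := by ring

end GlobalBalance

theorem stmt_4_general (lam beta : ℝ) (hlam : 0 < lam) (hbeta : 0 < beta)
    (r L S : ℕ) (hr : 1 ≤ r) (hL : 1 ≤ L) (hS : r < S)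
    (b : ℕ → ℝ)
    (hb_sum : ∑ i ∈ Finset.Icc 1 L, b i = 1)
    (c : ℝ)
    (θI : ℕ → ℝ) (θjl : ℕ → ℕ → ℝ) (θ0 : ℕ → ℝ)
    (hθI : ∀ k, r + 1 ≤ k → k ≤ S → θI k = c)
    (hθjl : ∀ j ℓ, 1 ≤ j → j ≤ r → 1 ≤ ℓ → ℓ ≤ L →
      θjl j ℓ = c * (lam / (lam + beta)) ^ (r + 1 - j) *
        ∑ i ∈ Finset.Icc ℓ L, b i * (beta / (lam + beta)) ^ (i - ℓ) *
          (Nat.choose (i - ℓ + r - j) (r - j) : ℝ))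
    (hθ0 : ∀ ℓ, 1 ≤ ℓ → ℓ ≤ L →
      θ0 ℓ = c * (lam / (lam + beta)) ^ r * (lam / beta) *
        ∑ i ∈ Finset.Icc ℓ L, (∑ g ∈ Finset.Icc i L, b g) *
          (beta / (lam + beta)) ^ (i - ℓ) *
          (Nat.choose (i - ℓ + r - 1) (r - 1) : ℝ)) :
    -- (1)
    (lam * θI S = beta * (θ0 1 + ∑ j ∈ Finset.Icc 1 r, θjl j 1)) ∧
    -- (2)
    (∀ k, r + 1 ≤ k → k + 1 ≤ S → θI k = θI (k + 1)) ∧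
    -- (3)
    (∀ ℓ, 1 ≤ ℓ → ℓ < L →
      (lam + beta) * θjl r ℓ = lam * b ℓ * θI (r + 1) + beta * θjl r (ℓ + 1)) ∧
    -- (4)
    ((lam + beta) * θjl r L = lam * b L * θI (r + 1)) ∧
    -- (5)
    (∀ j, 1 ≤ j → j < r → (lam + beta) * θjl j L = lam * θjl (j + 1) L) ∧
    -- (6)
    (∀ j ℓ, 1 ≤ j → j < r → 1 ≤ ℓ → ℓ < L →
      (lam + beta) * θjl j ℓ = lam * θjl (j + 1) ℓ + beta * θjl j (ℓ + 1)) ∧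
    -- (7)
    (∀ ℓ, 1 ≤ ℓ → ℓ < L →
      beta * θ0 ℓ = lam * θjl 1 ℓ + beta * θ0 (ℓ + 1)) ∧
    -- (8)
    (beta * θ0 L = lam * θjl 1 L) := by
  have hlb : lam + beta ≠ 0 := by positivity
  have hx : ∀ j ℓ, 1 ≤ j → j ≤ r → 1 ≤ ℓ → ℓ ≤ L →
      θjl j ℓ = stockWeight lam beta c r L b j ℓ := fun j ℓ h₁ h₂ h₃ h₄ =>
    (hθjl j ℓ h₁ h₂ h₃ h₄).trans (stockWeight_eq_sum lam beta c L b h₂ ℓ).symm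
  have hy : ∀ ℓ, 1 ≤ ℓ → ℓ ≤ L → θ0 ℓ = stockoutWeight lam beta c r L b ℓ :=
    fun ℓ h₁ h₂ => (hθ0 ℓ h₁ h₂).trans (stockoutWeight_eq_sum lam beta c L b hr ℓ).symm
  have hI : θI (r + 1) = c := hθI (r + 1) le_rfl hS
  refine ⟨?_, ?_, ?_, ?_, ?_, ?_, ?_, ?_⟩
  · rw [hθI S hS le_rfl, hy 1 le_rfl hL,
      sum_congr rfl fun j hj => hx j 1 (mem_Icc.mp hj).1 (mem_Icc.mp hj).2 le_rfl hL,
      stockWeight_global_balance c L hlb hbeta.ne' hr hb_sum]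
  · intro k h₁ h₂
    rw [hθI k h₁ (by omega), hθI (k + 1) (by omega) h₂]
  · intro ℓ h₁ h₂
    rw [hx r ℓ hr le_rfl h₁ h₂.le, hx r (ℓ + 1) hr le_rfl (by omega) h₂, hI]
    exact stockWeight_balance_top c L b hlb h₂.le
  · rw [hx r L hr le_rfl hL le_rfl, hI]
    exact stockWeight_balance_top_last c L b hlb
  · intro j h₁ h₂
    rw [hx j L h₁ h₂.le hL le_rfl, hx (j + 1) L (by omega) h₂ hL le_rfl]
    exact stockWeight_balance_last c L b hlb h₂
  · intro j ℓ h₁ h₂ h₃ h₄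
    rw [hx j ℓ h₁ h₂.le h₃ h₄.le, hx (j + 1) ℓ (by omega) h₂ h₃ h₄.le,
      hx j (ℓ + 1) h₁ h₂.le (by omega) h₄]
    exact stockWeight_balance c L b hlb h₂ ℓ
  · intro ℓ h₁ h₂
    rw [hy ℓ h₁ h₂.le, hx 1 ℓ le_rfl hr h₁ h₂.le, hy (ℓ + 1) (by omega) h₂]
    exact stockoutWeight_balance c L b hbeta.ne' ℓ
  · rw [hy L hL le_rfl, hx 1 L le_rfl hr hL le_rfl]
    exact stockoutWeight_balance_last c L b hbeta.ne'

/-- The explicit vector θ solves the balance equations of the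
M/M/1 queueing-inventory system under (r,S)-policy with phase-type lead times. -/
theorem stmt_4 (lam beta : ℝ) (hlam : 0 < lam) (hbeta : 0 < beta)
    (r L S : ℕ) (hr : 1 ≤ r) (hL : 1 ≤ L) (hS : r < S)
    (b : ℕ → ℝ) (hb_nonneg : ∀ i, 1 ≤ i → i ≤ L → 0 ≤ b i)
    (hb_sum : ∑ i ∈ Finset.Icc 1 L, b i = 1)
    (c : ℝ) (hc : 0 < c)
    (θI : ℕ → ℝ) (θjl : ℕ → ℕ → ℝ) (θ0 : ℕ → ℝ)
    (hθI : ∀ k, r + 1 ≤ k → k ≤ S → θI k = c)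
    (hθjl : ∀ j ℓ, 1 ≤ j → j ≤ r → 1 ≤ ℓ → ℓ ≤ L →
      θjl j ℓ = c * (lam / (lam + beta)) ^ (r + 1 - j) *
        ∑ i ∈ Finset.Icc ℓ L, b i * (beta / (lam + beta)) ^ (i - ℓ) *
          (Nat.choose (i - ℓ + r - j) (r - j) : ℝ))
    (hθ0 : ∀ ℓ, 1 ≤ ℓ → ℓ ≤ L →
      θ0 ℓ = c * (lam / (lam + beta)) ^ r * (lam / beta) *
        ∑ i ∈ Finset.Icc ℓ L, (∑ g ∈ Finset.Icc i L, b g) *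
          (beta / (lam + beta)) ^ (i - ℓ) *
          (Nat.choose (i - ℓ + r - 1) (r - 1) : ℝ)) :
    -- (1)
    (lam * θI S = beta * (θ0 1 + ∑ j ∈ Finset.Icc 1 r, θjl j 1)) ∧
    -- (2)
    (∀ k, r + 1 ≤ k → k + 1 ≤ S → θI k = θI (k + 1)) ∧
    -- (3)
    (∀ ℓ, 1 ≤ ℓ → ℓ < L →
      (lam + beta) * θjl r ℓ = lam * b ℓ * θI (r + 1) + beta * θjl r (ℓ + 1)) ∧
    -- (4)
    ((lam + beta) * θjl r L = lam * b L * θI (r + 1)) ∧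
    -- (5)
    (∀ j, 1 ≤ j → j < r → (lam + beta) * θjl j L = lam * θjl (j + 1) L) ∧
    -- (6)
    (∀ j ℓ, 1 ≤ j → j < r → 1 ≤ ℓ → ℓ < L →
      (lam + beta) * θjl j ℓ = lam * θjl (j + 1) ℓ + beta * θjl j (ℓ + 1)) ∧
    -- (7)
    (∀ ℓ, 1 ≤ ℓ → ℓ < L →
      beta * θ0 ℓ = lam * θjl 1 ℓ + beta * θ0 (ℓ + 1)) ∧
    -- (8)
    (beta * θ0 L = lam * θjl 1 L) :=
  stmt_4_general lam beta hlam hbeta r L S hr hL hS b hb_sum c θI θjl θ0 hθI hθjl hθ0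
end

section
/- Let K be a set partitioned into a nonempty subset K_W and a FINITE subset K_B, and let V = (v(k,m)) be a generator matrix on K which is uniformizable, i.e. inf_{k∈K} v(k,k) > −∞. Assume the flow condition: for every k ∈ K_B there exist n ≥ 1 and k = k_0, k_1, …, k_n ∈ K with v(k_i, k_{i+1}) > 0 for all 0 ≤ i < n and k_n ∈ K_W. Let λ > 0 and let M := λ·I_W − V act on ℓ∞(K) by (Mx)_k := λ·1[k∈K_W]·x_k − Σ_{m∈K} v(k,m)·x_m (these sums converge absolutely for every x ∈ ℓ∞(K)). If M is surjective onto ℓ∞(K), then M is bijective, i.e. λ·I_W − V is invertible. -/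
private lemma aux_tsum_split {α : Type*} (f : α → ℝ) (k : α)
    (h : Summable (fun m : {m : α // m ≠ k} => f (m : α))) :
    ∑' m, f m = f k + ∑' m : {m : α // m ≠ k}, f (m : α) := by
  classical
  have hc : Summable (fun m : ↥(({k} : Set α)ᶜ) => f (m : α)) := by
    exact (Equiv.subtypeEquivRight
      (fun m => Set.mem_compl_singleton_iff)).summable_iff.mpr h
  have hs : Summable (fun m : ↥({k} : Set α) => f (m : α)) :=
    (Set.finite_singleton k).summable _
  have hsplit := Summable.tsum_add_tsum_compl (s := ({k} : Set α)) hs hc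
  have h2 : (∑' m : ↥(({k} : Set α)ᶜ), f (m : α)) = ∑' m : {m : α // m ≠ k}, f (m : α) := by
    exact (Equiv.subtypeEquivRight
      (fun m => Set.mem_compl_singleton_iff)).tsum_eq (fun m : {m : α // m ≠ k} => f (m : α))
  rw [← hsplit, tsum_singleton, h2]


/-- For a uniformizable generator V with finite blocking set K_B and the
flow condition, if M = λ·I_W − V is surjective on ℓ∞(K) then it is bijective
(injective and surjective) on the bounded functions. -/
theorem stmt_5 {K : Type*}
    (KW KB : Set K) (hKW : KW.Nonempty) (hKB : KB.Finite)
    (hpart : ∀ k : K, k ∈ KW ↔ k ∉ KB)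
    [∀ k, Decidable (k ∈ KW)]
    (v : K → K → ℝ)
    (hv_offdiag : ∀ k m, k ≠ m → 0 ≤ v k m)
    (hv_summable : ∀ k, Summable (fun m : {m : K // m ≠ k} => v k (m : K)))
    (hv_diag : ∀ k, v k k = - ∑' m : {m : K // m ≠ k}, v k (m : K))
    (hunif : ∃ cst : ℝ, ∀ k, cst ≤ v k k)
    (hflow : ∀ k ∈ KB, ∃ (n : ℕ) (p : ℕ → K), 1 ≤ n ∧ p 0 = k ∧
      (∀ i < n, 0 < v (p i) (p (i + 1))) ∧ p n ∈ KW)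
    (lam : ℝ) (hlam : 0 < lam)
    (A : (K → ℝ) → (K → ℝ))
    (hA : ∀ x k, A x k = lam * (if k ∈ KW then 1 else 0) * x k - ∑' m, v k m * x m)
    (hsurj : ∀ y : K → ℝ, (∃ C, ∀ k, |y k| ≤ C) →
      ∃ x : K → ℝ, (∃ C, ∀ k, |x k| ≤ C) ∧ A x = y) :
    (∀ x : K → ℝ, (∃ C, ∀ k, |x k| ≤ C) → A x = 0 → x = 0) ∧
    (∀ y : K → ℝ, (∃ C, ∀ k, |y k| ≤ C) →
      ∃ x : K → ℝ, (∃ C, ∀ k, |x k| ≤ C) ∧ A x = y) := by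
  classical
  obtain ⟨cst, hcst⟩ := hunif
  -- off-diagonal entries of each row, as a subtype function, are nonneg
  have hv_nonneg : ∀ (k : K) (m : {m : K // m ≠ k}), 0 ≤ v k (m : K) :=
    fun k m => hv_offdiag k m (Ne.symm m.2)
  have hvkk_nonpos : ∀ k, v k k ≤ 0 := by
    intro k
    rw [hv_diag k]
    have : (0:ℝ) ≤ ∑' m : {m : K // m ≠ k}, v k (m : K) :=
      tsum_nonneg (fun m => hv_nonneg k m)
    linarith
  set c : ℝ := -cst with hc_def
  have hc_nonneg : 0 ≤ c := by
    obtain ⟨k0, _⟩ := hKW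
    have := hcst k0
    have := hvkk_nonpos k0
    simp only [hc_def]; linarith
  have hrow_le : ∀ k, (∑' m : {m : K // m ≠ k}, v k (m : K)) ≤ c := by
    intro k
    have h1 := hcst k
    rw [hv_diag k] at h1
    simp only [hc_def]; linarith
  -- summability of the relevant series for bounded x
  have hsumx : ∀ (x : K → ℝ) (C : ℝ), (∀ k, |x k| ≤ C) → ∀ k,
      Summable (fun m : {m : K // m ≠ k} => v k (m : K) * x (m : K)) := by
    intro x C hC k
    apply Summable.of_abs
    have hle : ∀ m : {m : K // m ≠ k}, |v k (m : K) * x (m : K)| ≤ v k (m : K) * C := by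
      intro m
      rw [abs_mul, abs_of_nonneg (hv_nonneg k m)]
      exact mul_le_mul_of_nonneg_left (hC m) (hv_nonneg k m)
    exact Summable.of_nonneg_of_le (fun m => abs_nonneg _) hle ((hv_summable k).mul_right C)
  -- the key maximum principle
  have key : ∀ (x : K → ℝ) (C : ℝ), (∀ k, |x k| ≤ C) →
      (∀ k, lam * (if k ∈ KW then 1 else 0) * x k
        = ∑' m : {m : K // m ≠ k}, v k (m : K) * (x (m : K) - x k)) →
      ∀ k, x k ≤ 0 := by
    intro x C hC heq
    by_contra hcon
    push_neg at hcon
    obtain ⟨k0, hk0⟩ := hcon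
    set s : ℝ := sSup (Set.range x) with hs_def
    have hbdd : BddAbove (Set.range x) := by
      refine ⟨C, ?_⟩
      rintro _ ⟨k, rfl⟩
      exact (abs_le.mp (hC k)).2
    have hle : ∀ k, x k ≤ s := fun k => le_csSup hbdd ⟨k, rfl⟩
    have hs_pos : 0 < s := lt_of_lt_of_le hk0 (hle k0)
    have hsum_diff : ∀ k, Summable
        (fun m : {m : K // m ≠ k} => v k (m : K) * (x (m : K) - x k)) := by
      intro k
      have := (hsumx x C hC k).sub ((hv_summable k).mul_right (x k))
      refine this.congr (fun m => ?_)
      ring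
    -- bound on KW points
    have hW : ∀ k ∈ KW, x k ≤ c * s / (lam + c) := by
      intro k hk
      have h1 := heq k
      rw [if_pos hk, mul_one] at h1
      have h2 : (∑' m : {m : K // m ≠ k}, v k (m : K) * (x (m : K) - x k))
          ≤ ∑' m : {m : K // m ≠ k}, v k (m : K) * (s - x k) := by
        apply Summable.tsum_le_tsum _ (hsum_diff k) ((hv_summable k).mul_right (s - x k))
        intro m
        exact mul_le_mul_of_nonneg_left (by linarith [hle (m : K)]) (hv_nonneg k m)
      rw [tsum_mul_right] at h2
      have h3 : (∑' m : {m : K // m ≠ k}, v k (m : K)) * (s - x k) ≤ c * (s - x k) :=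
        mul_le_mul_of_nonneg_right (hrow_le k) (by linarith [hle k])
      have h4 : lam * x k ≤ c * (s - x k) := by linarith [h1 ▸ le_trans h2 h3, h2.trans h3, h1.le.trans (h2.trans h3)]
      rw [le_div_iff₀ (by linarith : (0:ℝ) < lam + c)]
      nlinarith
    set s' : ℝ := c * s / (lam + c) with hs'_def
    have hs' : s' < s := by
      rw [hs'_def, div_lt_iff₀ (by linarith : (0:ℝ) < lam + c)]
      nlinarith
    -- the supremum is attained on KB
    obtain ⟨a, ⟨kb, rfl⟩, hkb⟩ := exists_lt_of_lt_csSup ⟨x k0, Set.mem_range_self k0⟩ hs'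
    have hkbB : kb ∈ KB := by
      by_contra h
      exact absurd (hW kb ((hpart kb).2 h)) (not_le.mpr hkb)
    have hKBne : hKB.toFinset.Nonempty := ⟨kb, hKB.mem_toFinset.2 hkbB⟩
    obtain ⟨kstar, hkstarF, hmax⟩ := hKB.toFinset.exists_max_image x hKBne
    have hkstarB : kstar ∈ KB := hKB.mem_toFinset.1 hkstarF
    have hxkstar : x kstar = s := by
      have hub : ∀ j, x j ≤ x kstar := by
        intro j
        by_cases hj : j ∈ KB
        · exact hmax j (hKB.mem_toFinset.2 hj)
        · have := hW j ((hpart j).2 hj)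
          have h2 : x kb ≤ x kstar := hmax kb (hKB.mem_toFinset.2 hkbB)
          linarith
      have : s ≤ x kstar := csSup_le ⟨x k0, Set.mem_range_self k0⟩ (by rintro _ ⟨j, rfl⟩; exact hub j)
      linarith [hle kstar]
    -- propagation step: from a KB point at the max, positive rates lead to max points
    have hstep : ∀ k, k ∈ KB → x k = s → ∀ m, m ≠ k → 0 < v k m → x m = s := by
      intro k hk hxk m hm hvm
      have h1 := heq k
      rw [if_neg (fun hkW => (hpart k).1 hkW hk), mul_zero, zero_mul] at h1
      set g : {m : K // m ≠ k} → ℝ := fun m => v k (m : K) * (s - x (m : K)) with hg_def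
      have hgsum : Summable g := by
        have := (hsum_diff k).neg
        refine this.congr (fun m => ?_)
        simp only [hg_def, hxk]
        ring
      have hgnn : ∀ m, 0 ≤ g m := by
        intro m
        exact mul_nonneg (hv_nonneg k m) (by linarith [hle (m : K)])
      have hgzero : ∑' m, g m = 0 := by
        have : ∑' m : {m : K // m ≠ k}, v k (m : K) * (x (m : K) - x k) = - ∑' m, g m := by
          rw [← tsum_neg]
          apply tsum_congr
          intro m
          simp only [hg_def, hxk]
          ring
        rw [this] at h1
        linarith
      have hterm : g ⟨m, hm⟩ = 0 := by
        have h2 : g ⟨m, hm⟩ ≤ ∑' m, g m := Summable.le_tsum hgsum ⟨m, hm⟩ (fun j _ => hgnn j)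
        have h3 := hgnn ⟨m, hm⟩
        rw [hgzero] at h2
        linarith
      simp only [hg_def] at hterm
      rcases mul_eq_zero.mp hterm with h | h
      · exact absurd h (ne_of_gt hvm)
      · linarith [sub_eq_zero.mp h]
    -- follow the flow path to reach KW at the max: contradiction
    obtain ⟨n, p, hn1, hp0, hppos, hpnW⟩ := hflow kstar hkstarB
    have hpath : ∀ i, i ≤ n → x (p i) = s := by
      intro i
      induction i with
      | zero => intro _; rw [hp0]; exact hxkstar
      | succ i ih =>
        intro hi
        have hxi : x (p i) = s := ih (Nat.le_of_succ_le hi)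
        have hiB : p i ∈ KB := by
          by_contra h
          have := hW (p i) ((hpart (p i)).2 h)
          linarith
        have hvp : 0 < v (p i) (p (i + 1)) := hppos i (Nat.lt_of_succ_le hi)
        have hne : p (i + 1) ≠ p i := by
          intro h
          rw [h] at hvp
          linarith [hvkk_nonpos (p i)]
        exact hstep (p i) hiB hxi (p (i + 1)) hne hvp
    have hfin : x (p n) = s := hpath n le_rfl
    have := hW (p n) hpnW
    linarith
  -- translating A x = 0 into the balance equation
  have heqA : ∀ (x : K → ℝ) (C : ℝ), (∀ k, |x k| ≤ C) → A x = 0 →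
      ∀ k, lam * (if k ∈ KW then 1 else 0) * x k
        = ∑' m : {m : K // m ≠ k}, v k (m : K) * (x (m : K) - x k) := by
    intro x C hC hAx k
    have h0 : A x k = 0 := by rw [hAx]; rfl
    rw [hA x k] at h0
    have hfull : (∑' m, v k m * x m)
        = v k k * x k + ∑' m : {m : K // m ≠ k}, v k (m : K) * x (m : K) :=
      aux_tsum_split (fun m => v k m * x m) k (hsumx x C hC k)
    have hfk : v k k * x k = - (∑' m : {m : K // m ≠ k}, v k (m : K)) * x k := by
      rw [hv_diag k]
    have hdiff : (∑' m : {m : K // m ≠ k}, v k (m : K) * x (m : K))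
        - (∑' m : {m : K // m ≠ k}, v k (m : K)) * x k
        = ∑' m : {m : K // m ≠ k}, v k (m : K) * (x (m : K) - x k) := by
      rw [← tsum_mul_right, ← Summable.tsum_sub (hsumx x C hC k) ((hv_summable k).mul_right (x k))]
      apply tsum_congr
      intro m
      ring
    rw [hfull, hfk] at h0
    rw [← hdiff]
    linarith
  constructor
  · intro x hxb hAx
    obtain ⟨C, hC⟩ := hxb
    have h1 : ∀ k, x k ≤ 0 := key x C hC (heqA x C hC hAx)
    have hAnx : A (-x) = 0 := by
      funext k
      have h0 : A x k = 0 := by rw [hAx]; rfl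
      rw [hA x k] at h0
      have hneg : (∑' m, v k m * (-x) m) = - ∑' m, v k m * x m := by
        rw [← tsum_neg]
        exact tsum_congr (fun m => by simp only [Pi.neg_apply]; ring)
      simp only [Pi.zero_apply]
      rw [hA (-x) k, hneg]
      simp only [Pi.neg_apply]
      linarith [h0]
    have h2 : ∀ k, (-x) k ≤ 0 :=
      key (-x) C (fun k => by simpa using hC k) (heqA (-x) C (fun k => by simpa using hC k) hAnx)
    funext k
    have := h2 k
    simp only [Pi.neg_apply] at this
    simp only [Pi.zero_apply]
    linarith [h1 k]
  · exact hsurj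
end

section
/- Fix an integer N ≥ 1, rates λ > 0, ν_m > 0, ν_r > 0 and ν_0,…,ν_{N−1} ≥ 0. Let K := {0,1,…,N−1} ∪ {b_m, b_r} and define the K×K matrix Q̃ by: Q̃(k,k) = −(ν_k + λ) and Q̃(k,k+1) = λ and Q̃(k,b_r) = ν_k for 0 ≤ k ≤ N−2; Q̃(N−1,N−1) = −(ν_{N−1}+λ), Q̃(N−1,b_m) = λ, Q̃(N−1,b_r) = ν_{N−1}; Q̃(b_m,0) = ν_m, Q̃(b_m,b_m) = −ν_m; Q̃(b_r,0) = ν_r, Q̃(b_r,b_r) = −ν_r; all other entries equal 0. Define the row vector θ by θ(0) := 1, θ(k) := ∏_{i=1}^{k} λ/(ν_i + λ) for 1 ≤ k ≤ N−1, θ(b_m) := (λ/ν_m)·θ(N−1), and θ(b_r) := ((ν_0+λ)/ν_r) − (ν_m/ν_r)·θ(b_m). Then θ·Q̃ = 0, i.e. Σ_{k∈K} θ(k)·Q̃(k,m) = 0 for every m ∈ K; thus θ (after normalization) is the stationary environment distribution of the M/M/1 unreliable loss system with service counter, maintenance rate ν_m, repair rate ν_r and failure rates ν_k. -/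
/-!
Each column of `θ · Q̃ = 0` is a balance equation. For a counter state `k + 1` it reads
`θ (k + 1) (ν (k + 1) + λ) = θ k λ`, which is the recursion of the product defining `θ`; for `b_m`
it is the definition of `θ b_m`. Telescoping the counter equations gives
`∑_{k < N} θ k ν k = ν 0 + λ - λ θ (N - 1)`, and with this the columns of `b_r` and of `0` both
reduce to the definition of `θ b_r`.
-/

open Finset

theorem sum_range_add_two {M : Type*} {N : ℕ} [AddCommMonoid M] (f : ℕ → M) :
    ∑ k ∈ range (N + 2), f k = ∑ k ∈ range N, f k + f N + f (N + 1) := by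
  rw [sum_range_succ, sum_range_succ]

/-- The generator `Q̃` with the service counter in states `0, …, N - 1`, the maintenance state
`b_m` encoded as `N` and the repair state `b_r` as `N + 1`. -/
structure IsUnreliableServerGenerator (N : ℕ) (lam num nur : ℝ) (nu : ℕ → ℝ)
    (Q : ℕ → ℕ → ℝ) : Prop where
  diag : ∀ k < N, Q k k = -(nu k + lam)
  up : ∀ k < N, Q k (k + 1) = lam
  fail : ∀ k < N, Q k (N + 1) = nu k
  counter_other : ∀ k m, k < N → m ≠ k → m ≠ k + 1 → m ≠ N + 1 → Q k m = 0
  maint_zero : Q N 0 = num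
  maint_self : Q N N = -num
  maint_other : ∀ m, m ≠ 0 → m ≠ N → Q N m = 0
  repair_zero : Q (N + 1) 0 = nur
  repair_self : Q (N + 1) (N + 1) = -nur
  repair_other : ∀ m, m ≠ 0 → m ≠ N + 1 → Q (N + 1) m = 0

namespace IsUnreliableServerGenerator

variable {N : ℕ} {lam num nur : ℝ} {nu : ℕ → ℝ} {Q : ℕ → ℕ → ℝ}

theorem col_zero (hQ : IsUnreliableServerGenerator N lam num nur nu Q) (hN : 0 < N)
    (θ : ℕ → ℝ) :
    ∑ k ∈ range (N + 2), θ k * Q k 0 =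
      -(nu 0 + lam) * θ 0 + num * θ N + nur * θ (N + 1) := by
  rw [sum_range_add_two, sum_eq_single 0, hQ.diag 0 hN, hQ.maint_zero, hQ.repair_zero]
  · ring
  · intro k hk hk0
    rw [hQ.counter_other k 0 (mem_range.mp hk) hk0.symm (by omega) (by omega), mul_zero]
  · exact fun h ↦ absurd (mem_range.mpr hN) h

theorem col_counter (hQ : IsUnreliableServerGenerator N lam num nur nu Q) {k : ℕ}
    (hk : k + 1 < N) (θ : ℕ → ℝ) :
    ∑ j ∈ range (N + 2), θ j * Q j (k + 1) = lam * θ k - (nu (k + 1) + lam) * θ (k + 1) := by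
  rw [sum_range_add_two, sum_eq_add_of_mem k (k + 1) (by simp; omega) (by simpa using hk)
      (by omega), hQ.up k (by omega), hQ.diag (k + 1) hk,
    hQ.maint_other (k + 1) (by omega) (by omega), hQ.repair_other (k + 1) (by omega) (by omega)]
  · ring
  · intro j hj ⟨hjk, hjk'⟩
    rw [hQ.counter_other j (k + 1) (mem_range.mp hj) (Ne.symm hjk') (by omega) (by omega),
      mul_zero]

theorem col_maint (hQ : IsUnreliableServerGenerator N lam num nur nu Q) (hN : 0 < N)
    (θ : ℕ → ℝ) :
    ∑ k ∈ range (N + 2), θ k * Q k N = lam * θ (N - 1) - num * θ N := by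
  have hup : Q (N - 1) N = lam := by
    simpa [Nat.sub_add_cancel hN] using hQ.up (N - 1) (by omega)
  rw [sum_range_add_two, sum_eq_single (N - 1), hup, hQ.maint_self,
    hQ.repair_other N (by omega) (by omega)]
  · ring
  · intro k hk hkN
    rw [hQ.counter_other k N (mem_range.mp hk) (by simp at hk; omega) (by omega) (by omega),
      mul_zero]
  · exact fun h ↦ absurd (mem_range.mpr (by omega)) h

theorem col_repair (hQ : IsUnreliableServerGenerator N lam num nur nu Q) (θ : ℕ → ℝ) :
    ∑ k ∈ range (N + 2), θ k * Q k (N + 1) = ∑ k ∈ range N, θ k * nu k - nur * θ (N + 1) := by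
  rw [sum_range_add_two, sum_congr rfl fun k hk ↦ by rw [hQ.fail k (mem_range.mp hk)],
    hQ.maint_other (N + 1) (by omega) (by omega), hQ.repair_self]
  ring

end IsUnreliableServerGenerator

theorem prod_Icc_succ_div_mul {lam : ℝ} {nu : ℕ → ℝ} {k : ℕ} (hk : nu (k + 1) + lam ≠ 0) :
    (∏ i ∈ Icc 1 (k + 1), lam / (nu i + lam)) * (nu (k + 1) + lam) =
      (∏ i ∈ Icc 1 k, lam / (nu i + lam)) * lam := by
  rw [prod_Icc_succ_top (by omega), mul_assoc, div_mul_cancel₀ _ hk]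

theorem sum_mul_eq_of_balance {R : Type*} [CommRing R] {θ nu : ℕ → R} {lam : R} {n : ℕ}
    (h : ∀ k < n, θ (k + 1) * (nu (k + 1) + lam) = θ k * lam) :
    ∑ k ∈ range (n + 1), θ k * nu k = θ 0 * (nu 0 + lam) - lam * θ n := by
  induction n with
  | zero => simp only [zero_add, sum_range_one]; ring
  | succ n ih =>
    rw [sum_range_succ, ih fun k hk ↦ h k (by omega)]
    linear_combination h n (by omega)

/-- The explicit row vector θ satisfies θ·Q̃ = 0 for the M/M/1 unreliable
loss system with service counter (states 0,…,N−1), maintenance state b_m = N and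
repair state b_r = N+1. -/
theorem stmt_6 (N : ℕ) (hN : 1 ≤ N)
    (lam num nur : ℝ) (hlam : 0 < lam) (hnum : 0 < num) (hnur : 0 < nur)
    (nu : ℕ → ℝ) (hnu : ∀ k, k < N → 0 ≤ nu k)
    (Q : ℕ → ℕ → ℝ)
    (hQ_diag : ∀ k, k < N → Q k k = -(nu k + lam))
    (hQ_up : ∀ k, k < N → Q k (k + 1) = lam)
    (hQ_fail : ∀ k, k < N → Q k (N + 1) = nu k)
    (hQ_zero : ∀ k m, k < N → m ≠ k → m ≠ k + 1 → m ≠ N + 1 → Q k m = 0)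
    (hQ_m0 : Q N 0 = num) (hQ_mm : Q N N = -num)
    (hQ_mz : ∀ m, m ≠ 0 → m ≠ N → Q N m = 0)
    (hQ_r0 : Q (N + 1) 0 = nur) (hQ_rr : Q (N + 1) (N + 1) = -nur)
    (hQ_rz : ∀ m, m ≠ 0 → m ≠ N + 1 → Q (N + 1) m = 0)
    (θ : ℕ → ℝ)
    (hθ : ∀ k, k < N → θ k = ∏ i ∈ Finset.Icc 1 k, lam / (nu i + lam))
    (hθm : θ N = (lam / num) * θ (N - 1))
    (hθr : θ (N + 1) = (nu 0 + lam) / nur - (num / nur) * θ N) :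
    ∀ m, m < N + 2 → ∑ k ∈ Finset.range (N + 2), θ k * Q k m = 0 := by
  have hQ : IsUnreliableServerGenerator N lam num nur nu Q :=
    ⟨hQ_diag, hQ_up, hQ_fail, hQ_zero, hQ_m0, hQ_mm, hQ_mz, hQ_r0, hQ_rr, hQ_rz⟩
  have hθ0 : θ 0 = 1 := by simp [hθ 0 hN]
  have hbal : ∀ k < N - 1, θ (k + 1) * (nu (k + 1) + lam) = θ k * lam := fun k hk ↦ by
    rw [hθ k (by omega), hθ (k + 1) (by omega)]
    exact prod_Icc_succ_div_mul (by linarith [hnu (k + 1) (by omega)])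
  have hmaint : num * θ N = lam * θ (N - 1) := by rw [hθm]; field_simp
  have hrepair : nur * θ (N + 1) = nu 0 + lam - num * θ N := by rw [hθr]; field_simp
  have hfail : ∑ k ∈ range N, θ k * nu k = nu 0 + lam - lam * θ (N - 1) := by
    simpa [Nat.sub_add_cancel hN, hθ0] using sum_mul_eq_of_balance hbal
  intro m hm
  obtain hmN | rfl | rfl : m < N ∨ m = N ∨ m = N + 1 := by omega
  · cases m with
    | zero => rw [hQ.col_zero hN, hθ0]; linarith
    | succ k => rw [hQ.col_counter hmN]; linarith [hbal k (by omega)]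
  · rw [hQ.col_maint hN]; linarith
  · rw [hQ.col_repair, hfail]; linarith
end

section
/- Fix λ > 0, ν > 0, ν_m > 0, ν_r > 0 and cost constants c_b, c_m, c_r ≥ 0, and set a := λ/(ν+λ) ∈ (0,1). For integers N ≥ 1 define Den(N) := ( (ν+λ)/ν_r + (λ/ν_m − λ/ν_r)·a^{N−1} )·(1−a) + (1 − a^N), θ_N(b_m) := (λ/ν_m)·a^{N−1}·(1−a) / Den(N), θ_N(b_r) := ( (ν+λ)/ν_r − (λ/ν_r)·a^{N−1} )·(1−a) / Den(N), and g(N) := (c_b + c_m)·θ_N(b_m) + (c_b + c_r)·θ_N(b_r). Then Den(N) > 0 for every N ≥ 1, and the sign of g(N+1) − g(N) does not depend on N: either g(N+1) > g(N) for all N ≥ 1, or g(N+1) < g(N) for all N ≥ 1, or g(N+1) = g(N) for all N ≥ 1. In other words, with constant failure rate ν the cost function g is strictly increasing, strictly decreasing, or constant. -/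
/-! With `x = a ^ (N - 1)`, both `Den N` and `Den N * g N` are affine in `x`, so `g N` is a
fixed Möbius function of `x`. The difference of a Möbius function at `a * x` and at `x` is a
fixed constant (its "determinant") times `(1 - a) * x / (Den N * Den (N + 1))`, which is
positive; hence the sign of `g (N + 1) - g N` is that of the constant. -/

theorem trichotomy_of_sub_eq_const_mul_pos {u w : ℕ → ℝ} (K : ℝ)
    (hw : ∀ N, 1 ≤ N → 0 < w N) (hu : ∀ N, 1 ≤ N → u (N + 1) - u N = K * w N) :
    (∀ N, 1 ≤ N → u N < u (N + 1)) ∨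
    (∀ N, 1 ≤ N → u (N + 1) < u N) ∨
    (∀ N, 1 ≤ N → u (N + 1) = u N) := by
  rcases lt_trichotomy K 0 with hK | rfl | hK
  · exact Or.inr <| Or.inl fun N hN => by nlinarith [hu N hN, hw N hN]
  · exact Or.inr <| Or.inr fun N hN => by linarith [hu N hN]
  · exact Or.inl fun N hN => by nlinarith [hu N hN, hw N hN]

theorem sub_eq_of_eq_affine_div_affine {u D : ℕ → ℝ} {a p q r s : ℝ}
    (hD : ∀ N, 1 ≤ N → D N = r * a ^ (N - 1) + s) (hD0 : ∀ N, 1 ≤ N → D N ≠ 0)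
    (hu : ∀ N, 1 ≤ N → u N = (p * a ^ (N - 1) + q) / D N) (N : ℕ) (hN : 1 ≤ N) :
    u (N + 1) - u N = (q * r - p * s) * ((1 - a) * a ^ (N - 1) / (D N * D (N + 1))) := by
  have hN' : 1 ≤ N + 1 := by omega
  have hpow : a ^ (N + 1 - 1) = a * a ^ (N - 1) := (mul_pow_sub_one (by omega) a).symm
  rw [hu _ hN', hu _ hN, hpow, div_sub_div _ _ (hD0 _ hN') (hD0 _ hN), mul_div_assoc']
  congr 1
  · rw [hD _ hN', hD _ hN, hpow]
    ring
  · exact mul_comm _ _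

theorem unreliable_loss_den_pos {lam nu num nur a x : ℝ}
    (hlam : 0 < lam) (hnu : 0 < nu) (hnum : 0 < num) (hnur : 0 < nur)
    (ha0 : 0 < a) (ha1 : a < 1) (hx0 : 0 < x) (hx1 : x ≤ 1) :
    0 < ((nu + lam) / nur + (lam / num - lam / nur) * x) * (1 - a) + (1 - a * x) := by
  have hrepair : 0 < (nu + lam) / nur - lam / nur * x := by
    rw [mul_comm, ← mul_div_assoc, ← sub_div]
    exact div_pos (by nlinarith) hnur
  have hmaint : 0 < lam / num * x := by positivity
  have hidle : 0 < 1 - a * x := by nlinarith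
  nlinarith

theorem stmt_7_general (lam nu num nur : ℝ)
    (hlam : 0 < lam) (hnu : 0 < nu) (hnum : 0 < num) (hnur : 0 < nur)
    (cb cm cr : ℝ)
    (a : ℝ) (ha : a = lam / (nu + lam))
    (Den θm θr g : ℕ → ℝ)
    (hDen : ∀ N, 1 ≤ N → Den N =
      ((nu + lam) / nur + (lam / num - lam / nur) * a ^ (N - 1)) * (1 - a)
        + (1 - a ^ N))
    (hθm : ∀ N, 1 ≤ N → θm N = (lam / num) * a ^ (N - 1) * (1 - a) / Den N)
    (hθr : ∀ N, 1 ≤ N → θr N =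
      ((nu + lam) / nur - (lam / nur) * a ^ (N - 1)) * (1 - a) / Den N)
    (hg : ∀ N, 1 ≤ N → g N = (cb + cm) * θm N + (cb + cr) * θr N) :
    (∀ N, 1 ≤ N → 0 < Den N) ∧
    ((∀ N, 1 ≤ N → g N < g (N + 1)) ∨
     (∀ N, 1 ≤ N → g (N + 1) < g N) ∨
     (∀ N, 1 ≤ N → g (N + 1) = g N)) := by
  have ha0 : 0 < a := by rw [ha]; positivity
  have ha1 : a < 1 := by rw [ha, div_lt_one (by linarith)]; linarith
  have hpow : ∀ N, 1 ≤ N → a ^ N = a * a ^ (N - 1) :=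
    fun N hN => (mul_pow_sub_one (by omega) a).symm
  have hDpos : ∀ N, 1 ≤ N → 0 < Den N := fun N hN => by
    rw [hDen N hN, hpow N hN]
    exact unreliable_loss_den_pos hlam hnu hnum hnur ha0 ha1 (pow_pos ha0 _)
      (pow_le_one₀ ha0.le ha1.le)
  have hDen' : ∀ N, 1 ≤ N → Den N = ((lam / num - lam / nur) * (1 - a) - a) * a ^ (N - 1)
      + ((nu + lam) / nur * (1 - a) + 1) := fun N hN => by
    rw [hDen N hN, hpow N hN]; ring
  have hg' : ∀ N, 1 ≤ N → g N = (((cb + cm) * (lam / num) - (cb + cr) * (lam / nur)) * (1 - a)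
      * a ^ (N - 1) + (cb + cr) * ((nu + lam) / nur) * (1 - a)) / Den N := fun N hN => by
    rw [hg N hN, hθm N hN, hθr N hN]; ring
  refine ⟨hDpos, trichotomy_of_sub_eq_const_mul_pos _ (fun N hN => ?_)
    (sub_eq_of_eq_affine_div_affine hDen' (fun N hN => (hDpos N hN).ne') hg')⟩
  have := hDpos N hN
  have := hDpos (N + 1) (by omega)
  have : 0 < 1 - a := by linarith
  positivity

/-- With constant failure rate ν the cost function g(N) of the unreliable
M/M/1 loss system is strictly increasing, strictly decreasing or constant: Den(N) > 0
for all N ≥ 1 and the sign of g(N+1) − g(N) does not depend on N. -/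
theorem stmt_7 (lam nu num nur : ℝ)
    (hlam : 0 < lam) (hnu : 0 < nu) (hnum : 0 < num) (hnur : 0 < nur)
    (cb cm cr : ℝ) (hcb : 0 ≤ cb) (hcm : 0 ≤ cm) (hcr : 0 ≤ cr)
    (a : ℝ) (ha : a = lam / (nu + lam))
    (Den θm θr g : ℕ → ℝ)
    (hDen : ∀ N, 1 ≤ N → Den N =
      ((nu + lam) / nur + (lam / num - lam / nur) * a ^ (N - 1)) * (1 - a)
        + (1 - a ^ N))
    (hθm : ∀ N, 1 ≤ N → θm N = (lam / num) * a ^ (N - 1) * (1 - a) / Den N)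
    (hθr : ∀ N, 1 ≤ N → θr N =
      ((nu + lam) / nur - (lam / nur) * a ^ (N - 1)) * (1 - a) / Den N)
    (hg : ∀ N, 1 ≤ N → g N = (cb + cm) * θm N + (cb + cr) * θr N) :
    (∀ N, 1 ≤ N → 0 < Den N) ∧
    ((∀ N, 1 ≤ N → g N < g (N + 1)) ∨
     (∀ N, 1 ≤ N → g (N + 1) < g N) ∨
     (∀ N, 1 ≤ N → g (N + 1) = g N)) :=
  stmt_7_general lam nu num nur hlam hnu hnum hnur cb cm cr a ha Den θm θr g hDen hθm hθr hg
end

section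
/- Let K be a nonempty finite set partitioned into a nonempty subset K_W and a subset K_B, and let M ∈ ℝ^{K×K} satisfy: (i) |M_{kk}| = Σ_{m≠k} |M_{km}| for every k ∈ K_B; (ii) |M_{kk}| > Σ_{m≠k} |M_{km}| for every k ∈ K_W; and (iii) the flow condition: for every nonempty subset K̃_B ⊆ K_B there exist k ∈ K̃_B and m ∈ K ∖ K̃_B with M_{km} ≠ 0. Then M is invertible. (This generalizes the invertibility of irreducibly diagonally dominant matrices: no irreducibility of M is assumed.) -/
/-!
If `M v = 0` with `v ≠ 0`, let `S` be the set of indices where `|v|` is maximal. In a row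
`k ∈ S` the equation `M v = 0` forces `|M k k| ≤ ∑_{m ≠ k} |M k m|`, so `k` is not strictly
dominant and lies in `K_B`; there equality holds, which pins `|v m|` to the maximum wherever
`M k m ≠ 0`. Thus `S ⊆ K_B` is a nonempty set that no nonzero entry of `M` leaves, contradicting
the flow condition.
-/

open Finset

namespace Matrix

variable {K R : Type*} [Fintype K] [DecidableEq K] [Field R] [LinearOrder R]
  [IsStrictOrderedRing R] {M : Matrix K K R} {v : K → R} {k : K}

theorem abs_diag_mul_le_of_mulVec_eq_zero (hv : M *ᵥ v = 0) (k : K) :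
    |M k k| * |v k| ≤ ∑ m ∈ univ.erase k, |M k m| * |v m| := by
  have hrow : M k k * v k = -∑ m ∈ univ.erase k, M k m * v m := by
    have h := congrFun hv k
    rw [mulVec, dotProduct, ← add_sum_erase _ _ (mem_univ k)] at h
    exact eq_neg_of_add_eq_zero_left h
  calc |M k k| * |v k| = |∑ m ∈ univ.erase k, M k m * v m| := by rw [← abs_mul, hrow, abs_neg]
    _ ≤ ∑ m ∈ univ.erase k, |M k m * v m| := abs_sum_le_sum_abs _ _
    _ = ∑ m ∈ univ.erase k, |M k m| * |v m| := by simp only [abs_mul]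

theorem sum_abs_mul_le_of_forall_abs_le (hmax : ∀ m, |v m| ≤ |v k|) :
    ∑ m ∈ univ.erase k, |M k m| * |v m| ≤ (∑ m ∈ univ.erase k, |M k m|) * |v k| := by
  rw [sum_mul]
  exact sum_le_sum fun m _ => mul_le_mul_of_nonneg_left (hmax m) (abs_nonneg _)

theorem abs_diag_le_of_mulVec_eq_zero (hv : M *ᵥ v = 0) (hmax : ∀ m, |v m| ≤ |v k|)
    (hk : v k ≠ 0) : |M k k| ≤ ∑ m ∈ univ.erase k, |M k m| :=
  le_of_mul_le_mul_right
    ((abs_diag_mul_le_of_mulVec_eq_zero hv k).trans (sum_abs_mul_le_of_forall_abs_le hmax))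
    (abs_pos.mpr hk)

theorem abs_eq_of_mulVec_eq_zero (hv : M *ᵥ v = 0) (hmax : ∀ m, |v m| ≤ |v k|)
    (hdiag : |M k k| = ∑ m ∈ univ.erase k, |M k m|) {m : K} (hkm : M k m ≠ 0) :
    |v m| = |v k| := by
  obtain rfl | hmk := eq_or_ne m k
  · rfl
  have hsum :
      ∑ j ∈ univ.erase k, |M k j| * |v j| = ∑ j ∈ univ.erase k, |M k j| * |v k| := by
    refine le_antisymm (by rw [← sum_mul]; exact sum_abs_mul_le_of_forall_abs_le hmax) ?_
    rw [← sum_mul, ← hdiag]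
    exact abs_diag_mul_le_of_mulVec_eq_zero hv k
  have hterm := (sum_eq_sum_iff_of_le fun j _ =>
    mul_le_mul_of_nonneg_left (hmax j) (abs_nonneg (M k j))).mp hsum m
    (mem_erase.mpr ⟨hmk, mem_univ m⟩)
  exact mul_left_cancel₀ (abs_ne_zero.mpr hkm) hterm

end Matrix

theorem stmt_8_general {K : Type*} [Fintype K] [DecidableEq K]
    (KW KB : Set K)
    (hpart : ∀ k : K, k ∈ KW ↔ k ∉ KB)
    (M : Matrix K K ℝ)
    (hB : ∀ k ∈ KB, |M k k| = ∑ m ∈ Finset.univ.erase k, |M k m|)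
    (hW : ∀ k ∈ KW, ∑ m ∈ Finset.univ.erase k, |M k m| < |M k k|)
    (hflow : ∀ S : Set K, S ⊆ KB → S.Nonempty →
      ∃ k ∈ S, ∃ m, m ∉ S ∧ M k m ≠ 0) :
    IsUnit M := by
  rw [Matrix.isUnit_iff_isUnit_det, isUnit_iff_ne_zero]
  intro hdet
  obtain ⟨v, hv, hMv⟩ := Matrix.exists_mulVec_eq_zero_iff.mpr hdet
  obtain ⟨j, hj⟩ := Function.ne_iff.mp hv
  obtain ⟨k₀, -, hk₀⟩ := exists_max_image univ (fun m => |v m|) ⟨j, mem_univ j⟩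
  let S : Set K := {k | ∀ m, |v m| ≤ |v k|}
  have hSB : S ⊆ KB := fun k hk => by
    by_contra hkB
    have hvk : v k ≠ 0 := abs_pos.mp ((abs_pos.mpr hj).trans_le (hk j))
    exact (hW k ((hpart k).mpr hkB)).not_ge (Matrix.abs_diag_le_of_mulVec_eq_zero hMv hk hvk)
  obtain ⟨k, hk, m, hm, hkm⟩ := hflow S hSB ⟨k₀, fun m => hk₀ m (mem_univ m)⟩
  exact hm fun i => (Matrix.abs_eq_of_mulVec_eq_zero hMv hk (hB k (hSB hk)) hkm).symm ▸ hk i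

/-- A finite matrix which is diagonally dominant (with equality on K_B and
strict inequality on K_W) and satisfies the flow condition is invertible; no
irreducibility is assumed. -/
theorem stmt_8 {K : Type*} [Fintype K] [DecidableEq K] [Nonempty K]
    (KW KB : Set K) (hKW : KW.Nonempty)
    (hpart : ∀ k : K, k ∈ KW ↔ k ∉ KB)
    (M : Matrix K K ℝ)
    (hB : ∀ k ∈ KB, |M k k| = ∑ m ∈ Finset.univ.erase k, |M k m|)
    (hW : ∀ k ∈ KW, ∑ m ∈ Finset.univ.erase k, |M k m| < |M k k|)
    (hflow : ∀ S : Set K, S ⊆ KB → S.Nonempty →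
      ∃ k ∈ S, ∃ m, m ∉ S ∧ M k m ≠ 0) :
    IsUnit M :=
  stmt_8_general KW KB hpart M hB hW hflow
end

section
/- Let K be a nonempty finite set partitioned into a nonempty subset K_W and a subset K_B, let V = (v(k,m)) be a generator matrix on K (all off-diagonal entries nonnegative, each row summing to 0), and assume the flow condition: for every nonempty subset K̃_B ⊆ K_B there exist k ∈ K̃_B and m ∈ K ∖ K̃_B with v(k,m) > 0. Then for every λ > 0 the matrix λ·I_W − V is invertible, where I_W is the diagonal matrix with (I_W)_{kk} = 1 for k ∈ K_W and 0 for k ∈ K_B. -/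
/-- For a generator matrix V on a finite set K satisfying the flow
condition, λ·I_W − V is invertible for every λ > 0. -/
theorem stmt_9 {K : Type*} [Fintype K] [DecidableEq K] [Nonempty K]
    (KW KB : Set K) [∀ k, Decidable (k ∈ KW)] (hKW : KW.Nonempty)
    (hpart : ∀ k : K, k ∈ KW ↔ k ∉ KB)
    (V : Matrix K K ℝ)
    (hV_offdiag : ∀ k m, k ≠ m → 0 ≤ V k m)
    (hV_row : ∀ k, ∑ m, V k m = 0)
    (hflow : ∀ S : Set K, S ⊆ KB → S.Nonempty →
      ∃ k ∈ S, ∃ m, m ∉ S ∧ 0 < V k m) :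
    ∀ lam : ℝ, 0 < lam →
      IsUnit (lam • Matrix.diagonal (fun k => if k ∈ KW then (1:ℝ) else 0) - V) := by
  intro lam hlam
  rw [Matrix.isUnit_iff_isUnit_det, isUnit_iff_ne_zero]
  intro hdet
  obtain ⟨x, hx0, hx⟩ := Matrix.exists_mulVec_eq_zero_iff.mpr hdet
  obtain ⟨k0, -, hk0⟩ := Finset.exists_max_image Finset.univ (fun k => |x k|)
    Finset.univ_nonempty
  set M := |x k0| with hMdef
  have hbound : ∀ m, |x m| ≤ M := fun m => hk0 m (Finset.mem_univ m)
  have hMpos : 0 < M := by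
    obtain ⟨j, hj⟩ := Function.ne_iff.mp hx0
    have hj' : x j ≠ 0 := by simpa using hj
    exact lt_of_lt_of_le (abs_pos.mpr hj') (hbound j)
  -- the basic equation at each k
  have h1 : ∀ k, lam * ((if k ∈ KW then (1:ℝ) else 0) * x k) = ∑ m, V k m * x m := by
    intro k
    have h := congrFun hx k
    rw [Matrix.sub_mulVec] at h
    have h2 : ((lam • Matrix.diagonal (fun k => if k ∈ KW then (1:ℝ) else 0)).mulVec x) k
        = (V.mulVec x) k := by
      have := sub_eq_zero.mp (by simpa using h)
      exact this
    rw [Matrix.smul_mulVec] at h2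
    simp only [Pi.smul_apply, Matrix.mulVec_diagonal, smul_eq_mul] at h2
    rw [h2]
    simp [Matrix.mulVec, dotProduct]
  -- quadratic form of the equation
  have heq : ∀ k, lam * (if k ∈ KW then (1:ℝ) else 0) * (x k * x k)
      = ∑ m, V k m * (x m * x k - x k * x k) := by
    intro k
    have hrearr : ∑ m, V k m * (x m * x k - x k * x k)
        = ∑ m, (V k m * x m * x k - V k m * (x k * x k)) := by
      apply Finset.sum_congr rfl
      intro m _
      ring
    rw [hrearr, Finset.sum_sub_distrib, ← Finset.sum_mul, ← Finset.sum_mul, hV_row k,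
      ← h1 k]
    ring
  -- key fact: any maximizer is in KB and only flows to points with the same value
  have key : ∀ k, |x k| = M → k ∉ KW ∧ ∀ m, m ≠ k → 0 < V k m → x m = x k := by
    intro k hkM
    have hxk2 : x k * x k = M * M := by rw [← abs_mul_abs_self (x k), hkM]
    have hterm : ∀ m ∈ Finset.univ, V k m * (x m * x k - x k * x k) ≤ 0 := by
      intro m _
      rcases eq_or_ne m k with rfl | hmk
      · simp
      · apply mul_nonpos_of_nonneg_of_nonpos (hV_offdiag k m hmk.symm)
        have hle : x m * x k ≤ M * M := by
          calc x m * x k ≤ |x m * x k| := le_abs_self _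
            _ = |x m| * |x k| := abs_mul _ _
            _ ≤ M * M := mul_le_mul (hbound m) (le_of_eq hkM) (abs_nonneg _) hMpos.le
        rw [hxk2]
        linarith
    have hsumle : ∑ m, V k m * (x m * x k - x k * x k) ≤ 0 := Finset.sum_nonpos hterm
    have hkKW : k ∉ KW := by
      intro hk
      have h := heq k
      rw [if_pos hk] at h
      have hpos : 0 < lam * 1 * (x k * x k) := by rw [hxk2]; positivity
      linarith [h, hsumle, hpos]
    refine ⟨hkKW, ?_⟩
    have hsum0 : ∑ m, V k m * (x m * x k - x k * x k) = 0 := by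
      have h := heq k
      rw [if_neg hkKW] at h
      simpa using h.symm
    have hzero := (Finset.sum_eq_zero_iff_of_nonpos hterm).mp hsum0
    intro m hmk hVm
    have hz := hzero m (Finset.mem_univ m)
    rcases mul_eq_zero.mp hz with hV0 | hdiff
    · exact absurd hV0 (ne_of_gt hVm)
    · have hxkne : x k ≠ 0 := by
        intro h0
        rw [h0, abs_zero] at hkM
        exact absurd hkM.symm (ne_of_gt hMpos)
      have : x m * x k = x k * x k := by linarith [sub_eq_zero.mp hdiff]
      exact mul_right_cancel₀ hxkne this
  -- apply the flow condition to the maximizing set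
  have hsub : {m | x m = x k0} ⊆ KB := by
    intro m hm
    have hmM : |x m| = M := by
      rw [Set.mem_setOf_eq] at hm
      rw [hm]
    have hmKW := (key m hmM).1
    by_contra hmB
    exact hmKW ((hpart m).mpr hmB)
  obtain ⟨k, hkS, m, hmS, hVkm⟩ := hflow {m | x m = x k0} hsub ⟨k0, rfl⟩
  have hkval : x k = x k0 := hkS
  have hkM : |x k| = M := by rw [hkval]
  have hmk : m ≠ k := fun h => hmS (h ▸ hkS)
  have hxm := (key k hkM).2 m hmk hVkm
  exact hmS (by rw [Set.mem_setOf_eq, hxm, hkval])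
end

section
/- Let K be a set partitioned into a nonempty subset K_W and a FINITE subset K_B, and let M = (M_{km}) be a real K×K matrix satisfying: (i) |M_{kk}| = Σ_{m≠k} |M_{km}| for every k ∈ K_B; (ii) ND := sup_{k∈K_W} Σ_{m≠k} |M_{km}| < ∞; (iii) there exists ε > 0 with |M_{mm}| ≥ ND + ε for every m ∈ K_W; and (iv) the flow condition: for every k ∈ K_B there exist n ≥ 1 and k = k_0, k_1, …, k_n ∈ K with M_{k_i k_{i+1}} ≠ 0 for all 0 ≤ i < n and k_n ∈ K_W. Then M is injective on ℓ∞(K): if x : K → ℝ is bounded and Σ_{m∈K} M_{km}·x_m = 0 for every k ∈ K (all these sums converge absolutely), then x = 0. -/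
/-! Let `S = sup |x|`. In row `k`, `M x = 0` gives `|M k k| |x k| ≤ (∑_{m ≠ k} |M k m|) S`.
On `K_W` the uniform gap turns this into `|x k| ≤ ND S / (ND + ε)`, a bound strictly below `S`
when `S > 0`; since `K_B` is finite, `|x|` then attains `S` at some `k₀ ∈ K_B`. In a row of `K_B`
the estimate is an equality, so `|x| = S` propagates along every nonzero entry of such a row.
Following the path from `k₀` given by the flow condition, `|x| = S` reaches `K_W`, which is
impossible; hence `S = 0`. -/

section WeightedSum

variable {ι : Type*} {a x : ι → ℝ} {S : ℝ}

lemma summable_abs_mul_of_abs_le (ha : Summable fun i => |a i|) (hx : ∀ i, |x i| ≤ S) :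
    Summable fun i => |a i| * |x i| :=
  (ha.mul_right S).of_nonneg_of_le (fun _ => by positivity)
    (fun i => mul_le_mul_of_nonneg_left (hx i) (abs_nonneg _))

lemma abs_tsum_mul_le_tsum_abs_mul (ha : Summable fun i => |a i|) (hx : ∀ i, |x i| ≤ S) :
    |∑' i, a i * x i| ≤ ∑' i, |a i| * |x i| := by
  simpa only [Real.norm_eq_abs, abs_mul] using
    norm_tsum_le_tsum_norm (f := fun i => a i * x i)
      (by simpa only [Real.norm_eq_abs, abs_mul] using summable_abs_mul_of_abs_le ha hx)

lemma tsum_abs_mul_le (ha : Summable fun i => |a i|) (hx : ∀ i, |x i| ≤ S) :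
    ∑' i, |a i| * |x i| ≤ (∑' i, |a i|) * S := by
  rw [← tsum_mul_right]
  exact (summable_abs_mul_of_abs_le ha hx).tsum_le_tsum
    (fun i => mul_le_mul_of_nonneg_left (hx i) (abs_nonneg _)) (ha.mul_right S)

lemma abs_tsum_mul_le (ha : Summable fun i => |a i|) (hx : ∀ i, |x i| ≤ S) :
    |∑' i, a i * x i| ≤ (∑' i, |a i|) * S :=
  (abs_tsum_mul_le_tsum_abs_mul ha hx).trans (tsum_abs_mul_le ha hx)

lemma abs_eq_of_abs_tsum_mul_eq (ha : Summable fun i => |a i|) (hx : ∀ i, |x i| ≤ S)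
    (h : |∑' i, a i * x i| = (∑' i, |a i|) * S) {i : ι} (hi : a i ≠ 0) : |x i| = S := by
  by_contra hne
  have hlt : |a i| * |x i| < |a i| * S :=
    mul_lt_mul_of_pos_left ((hx i).lt_of_ne hne) (abs_pos.2 hi)
  have hsum := (summable_abs_mul_of_abs_le ha hx).tsum_lt_tsum
    (fun j => mul_le_mul_of_nonneg_left (hx j) (abs_nonneg _)) hlt (ha.mul_right S)
  rw [tsum_mul_right] at hsum
  linarith [abs_tsum_mul_le_tsum_abs_mul ha hx]

end WeightedSum

lemma abs_eq_abs_tsum_ne_of_tsum_eq_zero {K : Type*} {f : K → ℝ} {k : K}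
    (hf : Summable fun m : {m // m ≠ k} => f m) (h0 : ∑' m, f m = 0) :
    |f k| = |∑' m : {m // m ≠ k}, f m| := by
  have hf' : Summable fun m : ↥({k}ᶜ : Set K) => f m := hf
  have hsplit := (summable_subtype_and_compl.1 ⟨(Set.finite_singleton k).summable f, hf'⟩
    ).tsum_subtype_add_tsum_subtype_compl {k}
  rw [tsum_singleton, h0] at hsplit
  rw [eq_neg_of_add_eq_zero_left hsplit, abs_neg]
  rfl

section MatrixRow

variable {K : Type*} {M : K → K → ℝ} {x : K → ℝ} {S : ℝ} {k : K}

lemma abs_diag_mul_eq_abs_tsum_offDiag (hrow : Summable fun m : {m // m ≠ k} => |M k m|)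
    (hx : ∀ m, |x m| ≤ S) (hMx : ∑' m, M k m * x m = 0) :
    |M k k| * |x k| = |∑' m : {m // m ≠ k}, M k m * x m| := by
  rw [← abs_mul]
  refine abs_eq_abs_tsum_ne_of_tsum_eq_zero (f := fun m => M k m * x m) ?_ hMx
  refine Summable.of_abs ?_
  simpa only [abs_mul] using summable_abs_mul_of_abs_le hrow fun m => hx m

lemma abs_diag_mul_le (hrow : Summable fun m : {m // m ≠ k} => |M k m|)
    (hx : ∀ m, |x m| ≤ S) (hMx : ∑' m, M k m * x m = 0) :
    |M k k| * |x k| ≤ (∑' m : {m // m ≠ k}, |M k m|) * S := by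
  rw [abs_diag_mul_eq_abs_tsum_offDiag hrow hx hMx]
  exact abs_tsum_mul_le hrow fun m => hx m

lemma abs_eq_of_abs_diag_eq (hrow : Summable fun m : {m // m ≠ k} => |M k m|)
    (hx : ∀ m, |x m| ≤ S) (hMx : ∑' m, M k m * x m = 0)
    (hdiag : |M k k| = ∑' m : {m // m ≠ k}, |M k m|) (hk : |x k| = S) {m : K}
    (hm : M k m ≠ 0) : |x m| = S := by
  by_cases hmk : m = k
  · rwa [hmk]
  refine abs_eq_of_abs_tsum_mul_eq (a := fun m : {m // m ≠ k} => M k m) hrow (fun m => hx m)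
    ?_ (i := ⟨m, hmk⟩) hm
  rw [← abs_diag_mul_eq_abs_tsum_offDiag hrow hx hMx, hdiag, hk]

lemma abs_le_div_of_diag_gap {ND ε : ℝ} (hrow : Summable fun m : {m // m ≠ k} => |M k m|)
    (hx : ∀ m, |x m| ≤ S) (hMx : ∑' m, M k m * x m = 0) (hS : 0 ≤ S) (hε : 0 < ε)
    (hND : ∑' m : {m // m ≠ k}, |M k m| ≤ ND) (hgap : ND + ε ≤ |M k k|) :
    |x k| ≤ ND * S / (ND + ε) := by
  have hND0 : 0 ≤ ND := (tsum_nonneg fun _ => abs_nonneg _).trans hND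
  rw [le_div_iff₀ (by positivity)]
  calc |x k| * (ND + ε) ≤ |M k k| * |x k| := by
        rw [mul_comm]; exact mul_le_mul_of_nonneg_right hgap (abs_nonneg _)
    _ ≤ (∑' m : {m // m ≠ k}, |M k m|) * S := abs_diag_mul_le hrow hx hMx
    _ ≤ ND * S := mul_le_mul_of_nonneg_right hND hS

end MatrixRow

lemma Set.Finite.exists_mem_forall_le_of_forall_notMem_le {α β : Type*} [LinearOrder β]
    {f : α → β} {s : Set α} {A : β} {j : α} (hs : s.Finite) (hj : A < f j)
    (hf : ∀ i ∉ s, f i ≤ A) :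
    ∃ i ∈ s, ∀ j, f j ≤ f i := by
  have hjs : j ∈ s := by_contra fun h => (hf j h).not_gt hj
  obtain ⟨i, hi, hmax⟩ := s.exists_max_image f hs ⟨j, hjs⟩
  refine ⟨i, hi, fun l => ?_⟩
  by_cases hl : l ∈ s
  · exact hmax l hl
  · exact (hf l hl).trans (hj.le.trans (hmax j hjs))

lemma mem_of_path {K : Type*} {T : Set K} {p : ℕ → K} {n : ℕ} (h0 : p 0 ∈ T)
    (hstep : ∀ i < n, p i ∈ T → p (i + 1) ∈ T) : p n ∈ T := by
  suffices ∀ i ≤ n, p i ∈ T from this n le_rfl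
  intro i
  induction i with
  | zero => exact fun _ => h0
  | succ i ih => exact fun hi => hstep i hi (ih (Nat.le_of_succ_le hi))

/-- A matrix M with equality-dominance on the finite set K_B, uniform
strict dominance on K_W and the flow condition is injective on ℓ∞(K). -/
theorem stmt_11 {K : Type*}
    (KW KB : Set K) (hKW : KW.Nonempty) (hKB : KB.Finite)
    (hpart : ∀ k : K, k ∈ KW ↔ k ∉ KB)
    (M : K → K → ℝ)
    (hrow_summable : ∀ k, Summable (fun m : {m : K // m ≠ k} => |M k (m : K)|))
    (hB : ∀ k ∈ KB, |M k k| = ∑' m : {m : K // m ≠ k}, |M k (m : K)|)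
    (ND ε : ℝ) (hε : 0 < ε)
    (hND : ∀ k ∈ KW, ∑' m : {m : K // m ≠ k}, |M k (m : K)| ≤ ND)
    (hgap : ∀ m ∈ KW, ND + ε ≤ |M m m|)
    (hflow : ∀ k ∈ KB, ∃ (n : ℕ) (p : ℕ → K), 1 ≤ n ∧ p 0 = k ∧
      (∀ i < n, M (p i) (p (i + 1)) ≠ 0) ∧ p n ∈ KW) :
    ∀ x : K → ℝ, (∃ C, ∀ k, |x k| ≤ C) →
      (∀ k, ∑' m, M k m * x m = 0) → x = 0 := by
  rintro x ⟨C, hC⟩ hMx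
  obtain ⟨w, hw⟩ := hKW
  have : Nonempty K := ⟨w⟩
  set S := ⨆ k, |x k|
  have hxS : ∀ k, |x k| ≤ S := le_ciSup ⟨C, Set.forall_mem_range.2 hC⟩
  suffices hS : S ≤ 0 from funext fun k => abs_nonpos_iff.1 ((hxS k).trans hS)
  by_contra! hS
  have hND0 : 0 ≤ ND := (tsum_nonneg fun _ => abs_nonneg _).trans (hND w hw)
  have hA : ND * S / (ND + ε) < S := by
    rw [div_lt_iff₀ (by positivity)]
    nlinarith
  have hWle : ∀ k ∈ KW, |x k| ≤ ND * S / (ND + ε) := fun k hk =>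
    abs_le_div_of_diag_gap (hrow_summable k) hxS (hMx k) hS.le hε (hND k hk) (hgap k hk)
  have hW : ∀ k ∈ KW, |x k| < S := fun k hk => (hWle k hk).trans_lt hA
  have hB' : ∀ k, |x k| = S → k ∈ KB := fun k hk =>
    by_contra fun h => (hW k ((hpart k).2 h)).ne hk
  obtain ⟨j, hj⟩ := exists_lt_of_lt_ciSup hA
  obtain ⟨k₀, hk₀, hmax⟩ :=
    hKB.exists_mem_forall_le_of_forall_notMem_le hj fun k hk => hWle k ((hpart k).2 hk)
  have hk₀S : |x k₀| = S := le_antisymm (hxS k₀) (ciSup_le hmax)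
  obtain ⟨n, p, -, rfl, hpath, hpn⟩ := hflow k₀ hk₀
  have hpnS : p n ∈ {k | |x k| = S} := mem_of_path hk₀S fun i hi hpi =>
    abs_eq_of_abs_diag_eq (hrow_summable _) hxS (hMx _) (hB _ (hB' _ hpi)) hpi (hpath i hi)
  exact (hW _ hpn).ne hpnS
end

section
/- Let K be a nonempty finite set partitioned into a nonempty subset K_W and a subset K_B, with I_W the associated 0/1 diagonal matrix, let V ∈ ℝ^{K×K}, λ > 0 and μ(i) > 0 for i ≥ 1, and assume that λ·I_W − V and (λ+μ(i))·I_W − V are invertible for every i ≥ 1. Define W := λ·(λ·I_W − V)^{-1}·I_W, and matrices U^{(i,n)} for i ≥ 1, n ≥ 0 by U^{(i,0)} := μ(i)·((λ+μ(i))·I_W − V)^{-1}·I_W and U^{(i,n+1)} := ((λ+μ(i))·I_W − V)^{-1}·λ·I_W·U^{(i+1,n)}. For n ≥ 0 set M^{(n)} := W·U^{(1,n)} + Σ_{i=1}^{n+1} ( ∏_{j=1}^{i} λ/μ(j) )·U^{(i,n−i+1)}. Then for every n ≥ 0: M^{(n)} = ( ∏_{i=1}^{n} λ/μ(i) )·λ·(λ·I_W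 − V)^{-1}·I_W; in particular M^{(0)} = λ·(λ·I_W − V)^{-1}·I_W and M^{(n)} = ( ∏_{i=1}^{n} λ/μ(i) )·M^{(0)}. -/
/-!
Write `A = λ I_W - V` and `C_i = A + μ_i I_W`. The resolvent identity
`A⁻¹ - C_i⁻¹ = μ_i A⁻¹ I_W C_i⁻¹` says `(W + λ/μ_i) C_i⁻¹ = (λ/μ_i) A⁻¹`. Through the recursion
for `U`, this turns the sum defining `M^(n)`, started at level `s`, into `λ/μ_s` times the same
sum started at level `s + 1` with `n` lowered by one; at `n = 0` the sum collapses to `W`.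
-/

open Finset

section WeightedTail

variable {𝕜 R : Type*} [CommSemiring 𝕜] [Semiring R] [Algebra 𝕜 R]

def weightedTail (U : ℕ → ℕ → R) (r : ℕ → 𝕜) (s n : ℕ) : R :=
  ∑ i ∈ range (n + 1), (∏ j ∈ range (i + 1), r (s + j)) • U (s + i) (n - i)

variable {U : ℕ → ℕ → R} {r : ℕ → 𝕜}

theorem weightedTail_zero (s : ℕ) : weightedTail U r s 0 = r s • U s 0 := by
  simp [weightedTail]

theorem weightedTail_succ (s n : ℕ) :
    weightedTail U r s (n + 1) = r s • U s (n + 1) + r s • weightedTail U r (s + 1) n := by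
  rw [weightedTail, sum_range_succ', add_comm, weightedTail, smul_sum]
  congr 1
  · simp
  refine sum_congr rfl fun i _ => ?_
  rw [prod_range_succ', mul_comm, ← smul_smul, Nat.add_sub_add_right]
  simp only [add_zero, add_assoc, add_comm 1]

theorem weightedTail_one (n : ℕ) :
    weightedTail U r 1 n = ∑ i ∈ Icc 1 (n + 1), (∏ j ∈ Icc 1 i, r j) • U i (n + 1 - i) := by
  rw [← Ico_add_one_right_eq_Icc, sum_Ico_eq_sum_range, weightedTail]
  refine sum_congr (by simp) fun i _ => ?_
  rw [← Ico_add_one_right_eq_Icc, prod_Ico_eq_prod_range, add_tsub_cancel_right, add_comm 1 i, Nat.add_sub_add_right]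

theorem mul_add_weightedTail_eq_prod_smul {W : R}
    (h0 : ∀ s, 1 ≤ s → W * U s 0 + r s • U s 0 = W)
    (hstep : ∀ s n, 1 ≤ s → W * U s (n + 1) + r s • U s (n + 1) = r s • (W * U (s + 1) n))
    (n : ℕ) {s : ℕ} (hs : 1 ≤ s) :
    W * U s n + weightedTail U r s n = (∏ j ∈ range n, r (s + j)) • W := by
  induction n generalizing s with
  | zero => simpa [weightedTail_zero] using h0 s hs
  | succ n ih =>
    rw [weightedTail_succ, ← add_assoc, hstep s n hs, ← smul_add, ih (by omega), smul_smul,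
      prod_range_succ', mul_comm]
    simp only [add_zero, add_assoc, add_comm 1]

end WeightedTail

theorem Matrix.smul_inv_mul_mul_inv_add_div_smul_inv {n 𝕜 : Type*} [Fintype n] [DecidableEq n]
    [Field 𝕜] {A P : Matrix n n 𝕜} {lam mu : 𝕜} (hA : IsUnit A) (hC : IsUnit (A + mu • P))
    (hmu : mu ≠ 0) :
    lam • (A⁻¹ * P) * (A + mu • P)⁻¹ + (lam / mu) • (A + mu • P)⁻¹ = (lam / mu) • A⁻¹ := by
  have hres := Matrix.inv_sub_inv (iff_of_true hA hC)
  rw [add_sub_cancel_left, sub_eq_iff_eq_add] at hres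
  conv_rhs => rw [hres]
  rw [smul_add, Matrix.mul_smul, Matrix.smul_mul, Matrix.smul_mul, smul_smul,
    div_mul_cancel₀ _ hmu]

theorem stmt_12_general {K : Type*} [Fintype K] [DecidableEq K]
    (IW : Matrix K K ℝ)
    (V : Matrix K K ℝ)
    (lam : ℝ)
    (mu : ℕ → ℝ) (hmu : ∀ i, 1 ≤ i → 0 < mu i)
    (hinv0 : IsUnit (lam • IW - V))
    (hinv : ∀ i, 1 ≤ i → IsUnit ((lam + mu i) • IW - V))
    (W : Matrix K K ℝ) (hW : W = lam • ((lam • IW - V)⁻¹ * IW))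
    (U : ℕ → ℕ → Matrix K K ℝ)
    (hU0 : ∀ i, 1 ≤ i → U i 0 = mu i • (((lam + mu i) • IW - V)⁻¹ * IW))
    (hUs : ∀ i n, 1 ≤ i →
      U i (n + 1) = ((lam + mu i) • IW - V)⁻¹ * (lam • IW) * U (i + 1) n)
    (Mn : ℕ → Matrix K K ℝ)
    (hMn : ∀ n, Mn n = W * U 1 n +
      ∑ i ∈ Finset.Icc 1 (n + 1),
        (∏ j ∈ Finset.Icc 1 i, lam / mu j) • U i (n + 1 - i)) :
    (∀ n, Mn n = (∏ i ∈ Finset.Icc 1 n, lam / mu i) •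
        (lam • ((lam • IW - V)⁻¹ * IW))) ∧
    Mn 0 = lam • ((lam • IW - V)⁻¹ * IW) ∧
    (∀ n, Mn n = (∏ i ∈ Finset.Icc 1 n, lam / mu i) • Mn 0) := by
  have hshift : ∀ i, (lam + mu i) • IW - V = (lam • IW - V) + mu i • IW := fun i => by
    rw [add_smul]; abel
  have hres : ∀ s, 1 ≤ s → ∀ X : Matrix K K ℝ,
      W * (((lam + mu s) • IW - V)⁻¹ * X) + (lam / mu s) • (((lam + mu s) • IW - V)⁻¹ * X) =
        (lam / mu s) • ((lam • IW - V)⁻¹ * X) := fun s hs X => by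
    rw [← Matrix.mul_assoc, ← Matrix.smul_mul, ← Matrix.add_mul, ← Matrix.smul_mul, hW, hshift,
      Matrix.smul_inv_mul_mul_inv_add_div_smul_inv hinv0 (hshift s ▸ hinv s hs) (hmu s hs).ne']
  have h0 : ∀ s, 1 ≤ s → W * U s 0 + (lam / mu s) • U s 0 = W := fun s hs => by
    rw [hU0 s hs, Matrix.mul_smul, smul_comm (lam / mu s), ← smul_add, hres s hs, smul_smul,
      mul_div_cancel₀ _ (hmu s hs).ne', hW]
  have hstep : ∀ s n, 1 ≤ s → W * U s (n + 1) + (lam / mu s) • U s (n + 1) =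
      (lam / mu s) • (W * U (s + 1) n) := fun s n hs => by
    rw [hUs s n hs, Matrix.mul_assoc, hres s hs, hW, Matrix.smul_mul, Matrix.mul_smul,
      Matrix.smul_mul, Matrix.mul_assoc]
  have hM : ∀ n, Mn n = (∏ i ∈ Icc 1 n, lam / mu i) • W := fun n => by
    rw [hMn, ← weightedTail_one, mul_add_weightedTail_eq_prod_smul h0 hstep n le_rfl,
      ← Ico_add_one_right_eq_Icc, prod_Ico_eq_prod_range, add_tsub_cancel_right]
  refine ⟨fun n => hW ▸ hM n, by simpa [hW] using hM 0, fun n => by rw [hM n, hM 0]; simp⟩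

/-- For the M/M/1 loss system in a random environment, the matrices
M^(n) = W·U^(1,n) + Σ_{i=1}^{n+1} (∏_{j=1}^i λ/μ(j))·U^(i,n−i+1) satisfy
M^(n) = (∏_{i=1}^n λ/μ(i))·λ·(λ·I_W − V)⁻¹·I_W = (∏_{i=1}^n λ/μ(i))·M^(0). -/
theorem stmt_12 {K : Type*} [Fintype K] [DecidableEq K] [Nonempty K]
    (KW KB : Set K) [∀ k, Decidable (k ∈ KW)] (hKW : KW.Nonempty)
    (hpart : ∀ k : K, k ∈ KW ↔ k ∉ KB)
    (IW : Matrix K K ℝ)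
    (hIW : IW = Matrix.diagonal (fun k => if k ∈ KW then (1:ℝ) else 0))
    (V : Matrix K K ℝ)
    (lam : ℝ) (hlam : 0 < lam)
    (mu : ℕ → ℝ) (hmu : ∀ i, 1 ≤ i → 0 < mu i)
    (hinv0 : IsUnit (lam • IW - V))
    (hinv : ∀ i, 1 ≤ i → IsUnit ((lam + mu i) • IW - V))
    (W : Matrix K K ℝ) (hW : W = lam • ((lam • IW - V)⁻¹ * IW))
    (U : ℕ → ℕ → Matrix K K ℝ)
    (hU0 : ∀ i, 1 ≤ i → U i 0 = mu i • (((lam + mu i) • IW - V)⁻¹ * IW))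
    (hUs : ∀ i n, 1 ≤ i →
      U i (n + 1) = ((lam + mu i) • IW - V)⁻¹ * (lam • IW) * U (i + 1) n)
    (Mn : ℕ → Matrix K K ℝ)
    (hMn : ∀ n, Mn n = W * U 1 n +
      ∑ i ∈ Finset.Icc 1 (n + 1),
        (∏ j ∈ Finset.Icc 1 i, lam / mu j) • U i (n + 1 - i)) :
    (∀ n, Mn n = (∏ i ∈ Finset.Icc 1 n, lam / mu i) •
        (lam • ((lam • IW - V)⁻¹ * IW))) ∧
    Mn 0 = lam • ((lam • IW - V)⁻¹ * IW) ∧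
    (∀ n, Mn n = (∏ i ∈ Finset.Icc 1 n, lam / mu i) • Mn 0) :=
  stmt_12_general IW V lam mu hmu hinv0 hinv W hW U hU0 hUs Mn hMn
end

section
/- Fix integers 0 ≤ r < S, λ > 0 and ν_0,…,ν_r > 0. Let K := {0,1,…,S} with K_B := {0} and K_W := {1,…,S}, let V be the K×K matrix with v(k,S) = ν_k and v(k,k) = −ν_k for 0 ≤ k ≤ r and all other entries 0, and let R be the stochastic matrix with R(0,0) = 1, R(k,k−1) = 1 for 1 ≤ k ≤ S, and all other entries 0. Then λ·I_W − V is invertible, and the row vector θ̂ defined by θ̂(k) := ∏_{i=1}^{min(k,r)} (λ+ν_i)/λ for 0 ≤ k ≤ S−1 and θ̂(S) := 0 satisfies θ̂ · λ·(λ·I_W − V)^{-1}·I_W·R = θ̂. (After normalization, θ̂ is the stationary environment marginal of the Markov chain embedded at departure epochs in the M/M/1 queueing-inventory system under (r,S)-policy with lost sales and inventory-dependent replenishment rates ν_k.) -/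
/-!
The matrix `λ I_W - V` is `diag(ν₀, λ + ν₁, …, λ + ν_r, λ, …, λ) - u e_Sᵀ` with
`u = (ν₀, …, ν_r, 0, …, 0)`: upper triangular with nonzero diagonal, hence invertible.
Instead of inverting it we exhibit `x = θ̂ (λ I_W - V)⁻¹ = (1/ν₀, P₀/λ, …, P_{S-1}/λ)`,
where `P_n = ∏_{1 ≤ i ≤ min n r} (λ + ν_i)/λ`. On the diagonal, `x_n (λ + ν_n) = P_n`;
in column `S` the sum `∑_{k ≤ r} x_k ν_k` telescopes to `P_r = x_S λ`, which produces the
zero `θ̂(S)`. Finally `I_W R` discards `x₀` and shifts `x` down by one level, so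
`λ x I_W R = θ̂`.
-/

open Finset Matrix

variable {K : Type*} [Field K]

section RateProd

variable (lam : K) (nu : ℕ → K) (r : ℕ)

def rateProd (n : ℕ) : K := ∏ i ∈ Icc 1 (min n r), (lam + nu i) / lam

@[simp]
lemma rateProd_zero : rateProd lam nu r 0 = 1 := by
  simp [rateProd]

lemma rateProd_succ {n : ℕ} (hn : n < r) :
    rateProd lam nu r (n + 1) = rateProd lam nu r n * ((lam + nu (n + 1)) / lam) := by
  rw [rateProd, rateProd, min_eq_left hn, min_eq_left hn.le, prod_Icc_succ_top (by omega)]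

lemma rateProd_of_le {n : ℕ} (hn : r ≤ n) : rateProd lam nu r n = rateProd lam nu r r := by
  rw [rateProd, rateProd, min_eq_right hn, min_self]

lemma sum_range_rateProd_mul_div (hlam : lam ≠ 0) :
    ∑ n ∈ range r, rateProd lam nu r n * nu (n + 1) / lam = rateProd lam nu r r - 1 := by
  rw [← rateProd_zero lam nu r, ← sum_range_sub]
  refine sum_congr rfl fun n hn => ?_
  rw [rateProd_succ lam nu r (mem_range.1 hn)]
  field_simp
  ring

def orderRate (n : ℕ) : K := if n ≤ r then nu n else 0

/-- The diagonal of `λ I_W - V`. -/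
def diagRate (n : ℕ) : K := lam * (if n = 0 then 0 else 1) + orderRate nu r n

/-- The row vector `θ̂ (λ I_W - V)⁻¹`. -/
def resolventVec (n : ℕ) : K := if n = 0 then (nu 0)⁻¹ else rateProd lam nu r (n - 1) / lam

lemma resolventVec_mul_diagRate (hlam : lam ≠ 0) (hnu₀ : nu 0 ≠ 0) (n : ℕ) :
    resolventVec lam nu r n * diagRate lam nu r n = rateProd lam nu r n := by
  rcases n with _ | n
  · simp [resolventVec, diagRate, orderRate, hnu₀]
  · simp only [resolventVec, diagRate, orderRate, Nat.add_one_ne_zero, if_false,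
      Nat.add_sub_cancel, mul_one]
    by_cases hn : n + 1 ≤ r
    · rw [if_pos hn, rateProd_succ lam nu r hn]
      field_simp
    · rw [if_neg hn, rateProd_of_le lam nu r (by omega : r ≤ n),
        rateProd_of_le lam nu r (by omega : r ≤ n + 1)]
      field_simp
      ring

lemma sum_range_resolventVec_mul_orderRate (hlam : lam ≠ 0) (hnu₀ : nu 0 ≠ 0) {S : ℕ}
    (hrS : r ≤ S) :
    ∑ n ∈ range (S + 1), resolventVec lam nu r n * orderRate nu r n = rateProd lam nu r r := by
  rw [sum_range_succ', ← sum_range_add_sum_Ico _ hrS]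
  have hlow : ∀ n ∈ range r, resolventVec lam nu r (n + 1) * orderRate nu r (n + 1) =
      rateProd lam nu r n * nu (n + 1) / lam := fun n hn => by
    rw [resolventVec, orderRate, if_neg n.add_one_ne_zero,
      if_pos (Nat.succ_le_of_lt (mem_range.1 hn)), Nat.add_sub_cancel, div_mul_eq_mul_div]
  have hhigh : ∀ n ∈ Ico r S, resolventVec lam nu r (n + 1) * orderRate nu r (n + 1) = 0 :=
    fun n hn => by rw [orderRate, if_neg (by have := (mem_Ico.1 hn).1; omega), mul_zero]
  rw [sum_congr rfl hlow, sum_congr rfl hhigh, sum_range_rateProd_mul_div lam nu r hlam]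
  simp [resolventVec, orderRate, hnu₀]

end RateProd

lemma diagRate_pos {lam : ℝ} (hlam : 0 < lam) {nu : ℕ → ℝ} {r : ℕ}
    (hnu : ∀ i, i ≤ r → 0 < nu i) (n : ℕ) : 0 < diagRate lam nu r n := by
  have horder : 0 ≤ orderRate nu r n := by
    unfold orderRate
    split_ifs with h
    exacts [(hnu n h).le, le_rfl]
  rcases n with _ | n
  · simpa [diagRate, orderRate] using hnu 0 r.zero_le
  · simp only [diagRate, Nat.add_one_ne_zero, if_false, mul_one]
    linarith

section Triangular

variable {m : Type*} [Fintype m] [DecidableEq m] {R : Type*} [CommRing R]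

lemma isUnit_of_isUpperTriangular [LinearOrder m] {M : Matrix m m R} (hM : M.IsUpperTriangular)
    (hdiag : ∀ i, IsUnit (M i i)) : IsUnit M := by
  rw [isUnit_iff_isUnit_det, det_of_isUpperTriangular hM]
  exact IsUnit.prod_univ_iff.2 hdiag

lemma isUnit_diagonal_sub_vecMulVec_single_last {S : ℕ} {d u : Fin (S + 1) → R}
    (hd : ∀ k, IsUnit (d k)) (hu : u (Fin.last S) = 0) :
    IsUnit (diagonal d - vecMulVec u (Pi.single (Fin.last S) 1)) := by
  refine isUnit_of_isUpperTriangular (fun i j hji => ?_) fun i => ?_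
  · have hj : j ≠ Fin.last S := (hji.trans_le (Fin.le_last i)).ne
    simp [diagonal_apply_ne d (show i ≠ j from hji.ne'), vecMulVec_apply, hj]
  · by_cases hi : i = Fin.last S
    · subst hi
      simpa [vecMulVec_apply, hu] using hd _
    · simpa [vecMulVec_apply, hi] using hd i

lemma vecMul_diagonal_sub_vecMulVec (x d u e : m → R) :
    x ᵥ* (diagonal d - vecMulVec u e) = x * d - (x ⬝ᵥ u) • e := by
  ext k
  simp [vecMul_sub, vecMul_vecMulVec, vecMul_diagonal]

lemma vecMul_nonsing_inv_of_vecMul_eq {A : Matrix m m R} (hA : IsUnit A) {x y : m → R}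
    (h : x ᵥ* A = y) : y ᵥ* A⁻¹ = x := by
  rw [← h, vecMul_vecMul, mul_nonsing_inv A ((isUnit_iff_isUnit_det A).1 hA), vecMul_one]

end Triangular

section Inventory

variable {S r : ℕ}

lemma eq_vecMulVec_orderRate_sub_diagonal (hrS : r < S) {nu : ℕ → K}
    {V : Matrix (Fin (S + 1)) (Fin (S + 1)) K}
    (hV1 : ∀ k m : Fin (S + 1), (k : ℕ) ≤ r → (m : ℕ) = S → V k m = nu k)
    (hV2 : ∀ k : Fin (S + 1), (k : ℕ) ≤ r → V k k = -nu k)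
    (hV3 : ∀ k m : Fin (S + 1), (k : ℕ) ≤ r → m ≠ k → (m : ℕ) ≠ S → V k m = 0)
    (hV4 : ∀ k m : Fin (S + 1), r < (k : ℕ) → V k m = 0) :
    V = vecMulVec (fun k : Fin (S + 1) => orderRate nu r k) (Pi.single (Fin.last S) 1) -
      diagonal (fun k : Fin (S + 1) => orderRate nu r k) := by
  ext k m
  by_cases hk : (k : ℕ) ≤ r
  · have hkS : k ≠ Fin.last S := Fin.ne_of_val_ne (by simp; omega)
    by_cases hmS : m = Fin.last S
    · subst hmS
      simp [hV1 k _ hk (Fin.val_last S), vecMulVec_apply, orderRate, hk, diagonal_apply_ne _ hkS]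
    · have hmS' : (m : ℕ) ≠ S := fun h => hmS (Fin.ext h)
      by_cases hmk : m = k
      · subst hmk
        simp [hV2 m hk, vecMulVec_apply, orderRate, hk, hmS]
      · simp [hV3 k m hk hmk hmS', vecMulVec_apply, hmS, diagonal_apply_ne _ (Ne.symm hmk)]
  · simp [hV4 k m (by omega), vecMulVec_apply, orderRate, hk, diagonal_apply]

lemma vecMul_eq_shift {R : Matrix (Fin (S + 1)) (Fin (S + 1)) K}
    (hR2 : ∀ k m : Fin (S + 1), (m : ℕ) + 1 = (k : ℕ) → R k m = 1)
    (hR3 : ∀ k m : Fin (S + 1), ¬((k : ℕ) = 0 ∧ (m : ℕ) = 0) →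
      (m : ℕ) + 1 ≠ (k : ℕ) → R k m = 0)
    {f : ℕ → K} (hf : f 0 = 0) :
    (fun k : Fin (S + 1) => f k) ᵥ* R =
      fun m : Fin (S + 1) => if (m : ℕ) < S then f (m + 1) else 0 := by
  ext m
  have hrow : ∀ k : Fin (S + 1), f k * R k m = if (m : ℕ) + 1 = k then f k else 0 := by
    intro k
    by_cases hk : (k : ℕ) = 0
    · simp [hk, hf]
    · by_cases hmk : (m : ℕ) + 1 = k
      · simp [hmk, hR2 k m hmk]
      · simp [hmk, hR3 k m (fun h => hk h.1) hmk]
  simp only [vecMul, dotProduct]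
  rw [sum_congr rfl fun k _ => hrow k,
    Fin.sum_univ_eq_sum_range (fun n => if (m : ℕ) + 1 = n then f n else 0), sum_ite_eq]
  simp

lemma eq_rateProd_sub_single {lam : K} {nu : ℕ → K} (hrS : r ≤ S) {θ : Fin (S + 1) → K}
    (hθ : ∀ k : Fin (S + 1), (k : ℕ) < S →
      θ k = ∏ i ∈ Icc 1 (min (k : ℕ) r), (lam + nu i) / lam)
    (hθS : ∀ k : Fin (S + 1), (k : ℕ) = S → θ k = 0) :
    θ = (fun k : Fin (S + 1) => rateProd lam nu r k) -
      rateProd lam nu r r • Pi.single (Fin.last S) 1 := by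
  ext k
  obtain ⟨j, rfl⟩ | rfl := k.eq_castSucc_or_eq_last
  · simp [hθ j.castSucc (by simp), rateProd, (Fin.castSucc_lt_last j).ne]
  · simp [hθS _ (Fin.val_last S), rateProd_of_le lam nu r hrS]

lemma smul_diagonal_sub_eq_diagRate (lam : K) {nu : ℕ → K} (hrS : r < S)
    {V : Matrix (Fin (S + 1)) (Fin (S + 1)) K}
    (hV1 : ∀ k m : Fin (S + 1), (k : ℕ) ≤ r → (m : ℕ) = S → V k m = nu k)
    (hV2 : ∀ k : Fin (S + 1), (k : ℕ) ≤ r → V k k = -nu k)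
    (hV3 : ∀ k m : Fin (S + 1), (k : ℕ) ≤ r → m ≠ k → (m : ℕ) ≠ S → V k m = 0)
    (hV4 : ∀ k m : Fin (S + 1), r < (k : ℕ) → V k m = 0) :
    lam • diagonal (fun k : Fin (S + 1) => if (k : ℕ) = 0 then (0 : K) else 1) - V =
      diagonal (fun k : Fin (S + 1) => diagRate lam nu r k) -
        vecMulVec (fun k : Fin (S + 1) => orderRate nu r k) (Pi.single (Fin.last S) 1) := by
  rw [eq_vecMulVec_orderRate_sub_diagonal hrS hV1 hV2 hV3 hV4, ← diagonal_smul,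
    sub_sub_eq_add_sub, diagonal_add]
  rfl

lemma resolventVec_vecMul {lam : K} {nu : ℕ → K} (hlam : lam ≠ 0) (hnu₀ : nu 0 ≠ 0)
    (hrS : r ≤ S) :
    (fun k : Fin (S + 1) => resolventVec lam nu r k) ᵥ*
        (diagonal (fun k : Fin (S + 1) => diagRate lam nu r k) -
          vecMulVec (fun k : Fin (S + 1) => orderRate nu r k) (Pi.single (Fin.last S) 1)) =
      (fun k : Fin (S + 1) => rateProd lam nu r k) -
        rateProd lam nu r r • Pi.single (Fin.last S) 1 := by
  rw [vecMul_diagonal_sub_vecMulVec, dotProduct,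
    Fin.sum_univ_eq_sum_range (fun n => resolventVec lam nu r n * orderRate nu r n),
    sum_range_resolventVec_mul_orderRate lam nu r hlam hnu₀ hrS]
  congr 1
  exact funext fun k => resolventVec_mul_diagRate lam nu r hlam hnu₀ k

lemma smul_resolventVec_vecMul_vecMul {lam : K} {nu : ℕ → K} (hlam : lam ≠ 0) (hrS : r ≤ S)
    {R : Matrix (Fin (S + 1)) (Fin (S + 1)) K}
    (hR2 : ∀ k m : Fin (S + 1), (m : ℕ) + 1 = (k : ℕ) → R k m = 1)
    (hR3 : ∀ k m : Fin (S + 1), ¬((k : ℕ) = 0 ∧ (m : ℕ) = 0) →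
      (m : ℕ) + 1 ≠ (k : ℕ) → R k m = 0) :
    lam • ((fun k : Fin (S + 1) => resolventVec lam nu r k) ᵥ*
        diagonal (fun k : Fin (S + 1) => if (k : ℕ) = 0 then (0 : K) else 1) ᵥ* R) =
      (fun k : Fin (S + 1) => rateProd lam nu r k) -
        rateProd lam nu r r • Pi.single (Fin.last S) 1 := by
  set y : ℕ → K := fun n => resolventVec lam nu r n * if n = 0 then 0 else 1
  have hy : (fun k : Fin (S + 1) => resolventVec lam nu r k) ᵥ*
      diagonal (fun k : Fin (S + 1) => if (k : ℕ) = 0 then (0 : K) else 1) =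
        fun k : Fin (S + 1) => y k :=
    funext (vecMul_diagonal _ _)
  rw [hy, vecMul_eq_shift (f := y) hR2 hR3 (by simp [y])]
  ext m
  obtain ⟨j, rfl⟩ | rfl := m.eq_castSucc_or_eq_last
  · simp [y, resolventVec, (Fin.castSucc_lt_last j).ne]
    field_simp
  · simp [rateProd_of_le lam nu r hrS]

end Inventory

theorem stmt_13_general (r S : ℕ) (hrS : r < S)
    (lam : ℝ) (hlam : 0 < lam)
    (nu : ℕ → ℝ) (hnu : ∀ i, i ≤ r → 0 < nu i)
    (V R : Matrix (Fin (S + 1)) (Fin (S + 1)) ℝ)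
    (hV1 : ∀ k m : Fin (S + 1), (k : ℕ) ≤ r → (m : ℕ) = S → V k m = nu k)
    (hV2 : ∀ k : Fin (S + 1), (k : ℕ) ≤ r → V k k = -nu k)
    (hV3 : ∀ k m : Fin (S + 1), (k : ℕ) ≤ r → m ≠ k → (m : ℕ) ≠ S → V k m = 0)
    (hV4 : ∀ k m : Fin (S + 1), r < (k : ℕ) → V k m = 0)
    (hR2 : ∀ k m : Fin (S + 1), (m : ℕ) + 1 = (k : ℕ) → R k m = 1)
    (hR3 : ∀ k m : Fin (S + 1), ¬((k : ℕ) = 0 ∧ (m : ℕ) = 0) →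
      (m : ℕ) + 1 ≠ (k : ℕ) → R k m = 0)
    (IW : Matrix (Fin (S + 1)) (Fin (S + 1)) ℝ)
    (hIW : IW = Matrix.diagonal (fun k : Fin (S + 1) =>
      if (k : ℕ) = 0 then (0:ℝ) else 1))
    (θhat : Fin (S + 1) → ℝ)
    (hθhat : ∀ k : Fin (S + 1), (k : ℕ) < S →
      θhat k = ∏ i ∈ Finset.Icc 1 (min (k : ℕ) r), (lam + nu i) / lam)
    (hθhatS : ∀ k : Fin (S + 1), (k : ℕ) = S → θhat k = 0) :
    IsUnit (lam • IW - V) ∧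
    Matrix.vecMul θhat (lam • ((lam • IW - V)⁻¹ * IW * R)) = θhat := by
  have hA : lam • IW - V = diagonal (fun k : Fin (S + 1) => diagRate lam nu r k) -
      vecMulVec (fun k : Fin (S + 1) => orderRate nu r k) (Pi.single (Fin.last S) 1) := by
    rw [hIW]
    exact smul_diagonal_sub_eq_diagRate lam hrS hV1 hV2 hV3 hV4
  have hθ := eq_rateProd_sub_single hrS.le hθhat hθhatS
  have hunit : IsUnit (lam • IW - V) := hA ▸ isUnit_diagonal_sub_vecMulVec_single_last
    (fun k => (diagRate_pos hlam hnu k).ne'.isUnit) (if_neg (by simp; omega))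
  have hx : (fun k : Fin (S + 1) => resolventVec lam nu r k) ᵥ* (lam • IW - V) = θhat := by
    rw [hA, hθ]
    exact resolventVec_vecMul hlam.ne' (hnu 0 r.zero_le).ne' hrS.le
  refine ⟨hunit, ?_⟩
  rw [vecMul_smul, ← vecMul_vecMul, ← vecMul_vecMul, vecMul_nonsing_inv_of_vecMul_eq hunit hx,
    hθ, hIW]
  exact smul_resolventVec_vecMul_vecMul hlam.ne' hrS.le hR2 hR3

/-- For the M/M/1 queueing-inventory system under (r,S)-policy with lost
sales and inventory-dependent replenishment rates, λ·I_W − V is invertible and the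
explicit vector θ̂ is a fixed point of λ·(λ·I_W − V)⁻¹·I_W·R (environment marginal of
the embedded chain at departure epochs). -/
theorem stmt_13 (r S : ℕ) (hrS : r < S)
    (lam : ℝ) (hlam : 0 < lam)
    (nu : ℕ → ℝ) (hnu : ∀ i, i ≤ r → 0 < nu i)
    (V R : Matrix (Fin (S + 1)) (Fin (S + 1)) ℝ)
    (hV1 : ∀ k m : Fin (S + 1), (k : ℕ) ≤ r → (m : ℕ) = S → V k m = nu k)
    (hV2 : ∀ k : Fin (S + 1), (k : ℕ) ≤ r → V k k = -nu k)
    (hV3 : ∀ k m : Fin (S + 1), (k : ℕ) ≤ r → m ≠ k → (m : ℕ) ≠ S → V k m = 0)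
    (hV4 : ∀ k m : Fin (S + 1), r < (k : ℕ) → V k m = 0)
    (hR1 : ∀ k m : Fin (S + 1), (k : ℕ) = 0 → (m : ℕ) = 0 → R k m = 1)
    (hR2 : ∀ k m : Fin (S + 1), (m : ℕ) + 1 = (k : ℕ) → R k m = 1)
    (hR3 : ∀ k m : Fin (S + 1), ¬((k : ℕ) = 0 ∧ (m : ℕ) = 0) →
      (m : ℕ) + 1 ≠ (k : ℕ) → R k m = 0)
    (IW : Matrix (Fin (S + 1)) (Fin (S + 1)) ℝ)
    (hIW : IW = Matrix.diagonal (fun k : Fin (S + 1) =>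
      if (k : ℕ) = 0 then (0:ℝ) else 1))
    (θhat : Fin (S + 1) → ℝ)
    (hθhat : ∀ k : Fin (S + 1), (k : ℕ) < S →
      θhat k = ∏ i ∈ Finset.Icc 1 (min (k : ℕ) r), (lam + nu i) / lam)
    (hθhatS : ∀ k : Fin (S + 1), (k : ℕ) = S → θhat k = 0) :
    IsUnit (lam • IW - V) ∧
    Matrix.vecMul θhat (lam • ((lam • IW - V)⁻¹ * IW * R)) = θhat :=
  stmt_13_general r S hrS lam hlam nu hnu V R hV1 hV2 hV3 hV4 hR2 hR3 IW hIW θhat hθhat hθhatS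
end

section
/- Let K be a nonempty finite set partitioned into a nonempty subset K_W and a subset K_B, V a generator matrix on K, R a stochastic matrix on K, and λ > 0 such that λ·I_W − V is invertible. Suppose the row vector θ : K → ℝ solves the continuous-time environment equation θ·( λ·(I_W·R − I_W) + V ) = 0 and satisfies s := Σ_{k∈K_W} θ(k) ≠ 0. Then the row vector θ̂ := s^{-1}·θ·I_W·R solves the embedded-chain environment equation θ̂ · λ·(λ·I_W − V)^{-1}·I_W·R = θ̂. Moreover, if θ has nonnegative entries and Σ_{k∈K} θ(k) = 1, then θ̂ has nonnegative entries with Σ_{k∈K} θ̂(k) = 1, i.e. θ̂ is a probability vector. -/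
/-!
The balance equation rearranges to `θ (λ I_W R) = θ (λ I_W − V)`, so applying
`(λ I_W − V)⁻¹ I_W R` on the right turns `θ (λ I_W R) (λ I_W − V)⁻¹ I_W R` into `θ I_W R`:
up to normalisation, `θ I_W R` is fixed by the embedded chain. For the probability statement,
`θ I_W` is nonnegative with total mass `s`, and the stochastic matrix `R` preserves both.
-/

namespace Matrix

variable {n R : Type*} [Fintype n] [DecidableEq n]

lemma vecMul_smul_nonsing_inv_mul_eq_self [CommRing R] {A M : Matrix n n R} (hA : IsUnit A)
    {x : n → R} {c : R} (hx : x ᵥ* (c • M) = x ᵥ* A) :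
    (x ᵥ* M) ᵥ* (c • (A⁻¹ * M)) = x ᵥ* M := by
  have hxA : x ᵥ* A ᵥ* A⁻¹ = x := by
    rw [vecMul_vecMul, mul_nonsing_inv _ ((isUnit_iff_isUnit_det A).mp hA), vecMul_one]
  calc (x ᵥ* M) ᵥ* (c • (A⁻¹ * M)) = x ᵥ* (c • M) ᵥ* A⁻¹ ᵥ* M := by
        simp only [vecMul_vecMul, Matrix.mul_smul, Matrix.smul_mul, Matrix.mul_assoc]
    _ = x ᵥ* M := by rw [hx, hxA]

lemma sum_vecMul_of_mem_rowStochastic [Semiring R] [PartialOrder R] [IsOrderedRing R]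
    {M : Matrix n n R} (hM : M ∈ rowStochastic R n) (x : n → R) :
    ∑ j, (x ᵥ* M) j = ∑ i, x i := by
  simp only [← dotProduct_one, ← dotProduct_mulVec, hM.2]

end Matrix

open Matrix

theorem stmt_14_general {K : Type*} [Fintype K] [DecidableEq K]
    (KW : Set K) [∀ k, Decidable (k ∈ KW)]
    (IW : Matrix K K ℝ)
    (hIW : IW = Matrix.diagonal (fun k => if k ∈ KW then (1:ℝ) else 0))
    (V : Matrix K K ℝ)
    (R : Matrix K K ℝ)
    (hR_nonneg : ∀ k m, 0 ≤ R k m) (hR_row : ∀ k, ∑ m, R k m = 1)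
    (lam : ℝ)
    (hinv : IsUnit (lam • IW - V))
    (θ : K → ℝ)
    (hθ : Matrix.vecMul θ (lam • (IW * R - IW) + V) = 0)
    (s : ℝ) (hs : s = ∑ k ∈ Finset.univ.filter (fun k => k ∈ KW), θ k)
    (hs_ne : s ≠ 0)
    (θhat : K → ℝ) (hθhat : θhat = s⁻¹ • Matrix.vecMul θ (IW * R)) :
    Matrix.vecMul θhat (lam • ((lam • IW - V)⁻¹ * IW * R)) = θhat ∧
    ((∀ k, 0 ≤ θ k) → (∑ k, θ k = 1) →
      (∀ k, 0 ≤ θhat k) ∧ ∑ k, θhat k = 1) := by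
  have hbalance : θ ᵥ* (lam • (IW * R)) = θ ᵥ* (lam • IW - V) := by
    rw [← sub_eq_zero, ← vecMul_sub, ← hθ]
    congr 1
    module
  have hθIW : θ ᵥ* IW = fun k => if k ∈ KW then θ k else 0 := by
    ext k
    simp [hIW, vecMul_diagonal]
  have hR : R ∈ rowStochastic ℝ K := mem_rowStochastic_iff_sum.2 ⟨hR_nonneg, hR_row⟩
  refine ⟨?_, fun hθ_nonneg _ => ?_⟩
  · rw [hθhat, smul_vecMul, Matrix.mul_assoc,
      vecMul_smul_nonsing_inv_mul_eq_self hinv hbalance]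
  · have hθIW_nonneg : ∀ k, 0 ≤ (θ ᵥ* IW) k := by
      intro k
      simp only [hθIW]
      split_ifs
      exacts [hθ_nonneg k, le_rfl]
    have hs_nonneg : 0 ≤ s := hs ▸ Finset.sum_nonneg fun k _ => hθ_nonneg k
    rw [hθhat, ← vecMul_vecMul]
    refine ⟨fun k => mul_nonneg (inv_nonneg.2 hs_nonneg)
      (nonneg_vecMul_of_mem_rowStochastic hR hθIW_nonneg k), ?_⟩
    simp only [Pi.smul_apply, smul_eq_mul]
    rw [← Finset.mul_sum, sum_vecMul_of_mem_rowStochastic hR, hθIW, ← Finset.sum_filter, ← hs,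
      inv_mul_cancel₀ hs_ne]

/-- If θ solves the continuous-time environment equation
θ·(λ(I_W·R − I_W) + V) = 0 with Σ_{k∈K_W} θ(k) = s ≠ 0, then
θ̂ = s⁻¹·θ·I_W·R solves the embedded-chain environment equation
θ̂·λ·(λ·I_W − V)⁻¹·I_W·R = θ̂; if θ is a probability vector then so is θ̂. -/
theorem stmt_14 {K : Type*} [Fintype K] [DecidableEq K] [Nonempty K]
    (KW KB : Set K) [∀ k, Decidable (k ∈ KW)] (hKW : KW.Nonempty)
    (hpart : ∀ k : K, k ∈ KW ↔ k ∉ KB)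
    (IW : Matrix K K ℝ)
    (hIW : IW = Matrix.diagonal (fun k => if k ∈ KW then (1:ℝ) else 0))
    (V : Matrix K K ℝ)
    (hV_offdiag : ∀ k m, k ≠ m → 0 ≤ V k m) (hV_row : ∀ k, ∑ m, V k m = 0)
    (R : Matrix K K ℝ)
    (hR_nonneg : ∀ k m, 0 ≤ R k m) (hR_row : ∀ k, ∑ m, R k m = 1)
    (lam : ℝ) (hlam : 0 < lam)
    (hinv : IsUnit (lam • IW - V))
    (θ : K → ℝ)
    (hθ : Matrix.vecMul θ (lam • (IW * R - IW) + V) = 0)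
    (s : ℝ) (hs : s = ∑ k ∈ Finset.univ.filter (fun k => k ∈ KW), θ k)
    (hs_ne : s ≠ 0)
    (θhat : K → ℝ) (hθhat : θhat = s⁻¹ • Matrix.vecMul θ (IW * R)) :
    Matrix.vecMul θhat (lam • ((lam • IW - V)⁻¹ * IW * R)) = θhat ∧
    ((∀ k, 0 ≤ θ k) → (∑ k, θ k = 1) →
      (∀ k, 0 ≤ θhat k) ∧ ∑ k, θhat k = 1) :=
  stmt_14_general KW IW hIW V R hR_nonneg hR_row lam hinv θ hθ s hs hs_ne θhat hθhat
end

section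
/- Let K be a nonempty finite set partitioned into a nonempty subset K_W and a subset K_B, V ∈ ℝ^{K×K}, R ∈ ℝ^{K×K}, and λ > 0 such that I_W − λ^{-1}·V is invertible. If the row vector θ̂ : K → ℝ satisfies θ̂·( I_W − λ^{-1}·V )^{-1}·I_W·R = θ̂, then the row vector x := θ̂·( I_W − λ^{-1}·V )^{-1} satisfies x·( λ·(I_W·R − I_W) + V ) = 0, i.e. x solves the continuous-time environment steady-state equation. -/
/-- If θ̂ satisfies θ̂·(I_W − λ⁻¹V)⁻¹·I_W·R = θ̂ then
x = θ̂·(I_W − λ⁻¹V)⁻¹ solves the continuous-time environment steady-state equation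
x·(λ(I_W·R − I_W) + V) = 0. -/
theorem stmt_15 {K : Type*} [Fintype K] [DecidableEq K] [Nonempty K]
    (KW KB : Set K) [∀ k, Decidable (k ∈ KW)] (hKW : KW.Nonempty)
    (hpart : ∀ k : K, k ∈ KW ↔ k ∉ KB)
    (IW : Matrix K K ℝ)
    (hIW : IW = Matrix.diagonal (fun k => if k ∈ KW then (1:ℝ) else 0))
    (V R : Matrix K K ℝ)
    (lam : ℝ) (hlam : 0 < lam)
    (hinv : IsUnit (IW - lam⁻¹ • V))
    (θhat : K → ℝ)
    (hθhat : Matrix.vecMul θhat ((IW - lam⁻¹ • V)⁻¹ * IW * R) = θhat)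
    (x : K → ℝ) (hx : x = Matrix.vecMul θhat (IW - lam⁻¹ • V)⁻¹) :
    Matrix.vecMul x (lam • (IW * R - IW) + V) = 0 := by
  have hdet : IsUnit (IW - lam⁻¹ • V).det := (Matrix.isUnit_iff_isUnit_det _).mp hinv
  have h1 : Matrix.vecMul x (IW - lam⁻¹ • V) = θhat := by
    rw [hx, Matrix.vecMul_vecMul, Matrix.nonsing_inv_mul _ hdet, Matrix.vecMul_one]
  have h2 : Matrix.vecMul x (IW * R) = θhat := by
    rw [hx, Matrix.vecMul_vecMul, ← Matrix.mul_assoc, hθhat]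
  have hkey : lam • (IW * R - IW) + V = lam • (IW * R - (IW - lam⁻¹ • V)) := by
    simp only [smul_sub, smul_smul, mul_inv_cancel₀ hlam.ne', one_smul]
    abel
  have hsm : ∀ M : Matrix K K ℝ, Matrix.vecMul x (lam • M) = lam • Matrix.vecMul x M := by
    intro M
    ext j
    simp [Matrix.vecMul, dotProduct, Finset.mul_sum, mul_left_comm]
  rw [hkey, hsm, Matrix.vecMul_sub, h1, h2, sub_self, smul_zero]
end

section
/- Let K be a nonempty finite set partitioned into a nonempty subset K_W and a subset K_B, with I_W the associated 0/1 diagonal matrix, let V, R ∈ ℝ^{K×K}, λ > 0 and μ(i) > 0 for i ≥ 1, and assume λ·I_W − V and (λ+μ(i))·I_W − V are invertible for all i ≥ 1. Define W := λ·(λ·I_W − V)^{-1}·I_W, U^{(i,0)} := μ(i)·((λ+μ(i))·I_W − V)^{-1}·I_W, U^{(i,n+1)} := ((λ+μ(i))·I_W − V)^{-1}·λ·I_W·U^{(i+1,n)}, and the block matrices A^{(i,n)} := U^{(i,n)}·R and B^{(n)} := W·U^{(1,n)}·R. Fix c > 0 and set ξ(n) := c·∏_{i=1}^{n} λ/μ(i).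 If the row vector θ̂ : K → ℝ satisfies θ̂ · λ·(λ·I_W − V)^{-1}·I_W·R = θ̂, then the product-form vector π̂^{(n)} := ξ(n)·θ̂ solves the steady-state equations of the Markov chain embedded at departure epochs: for every n ∈ ℕ₀, ξ(0)·θ̂·B^{(n)} + Σ_{i=1}^{n+1} ξ(i)·θ̂·A^{(i, n−i+1)} = ξ(n)·θ̂. -/
/-!
Both `W` and the blocks `U (i, 0)` are built from resolvents of the pencil `s • I_W - V`, and the
resolvent identity gives `W * U (i, 0) + (λ / μ i) • U (i, 0) = W`. Since
`U (i, n + 1) = (λ / μ i) • U (i, 0) * U (i + 1, n)`, applying this identity to the leading terms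
makes the balance equation at level `n` telescope down to `ξ n • W * R`, and `θ̂` is a left fixed
vector of `W * R`.
-/

open Finset

namespace Matrix

variable {n α : Type*} [Fintype n] [DecidableEq n] [CommRing α]

theorem inv_smul_sub_sub_inv_smul_sub (P V : Matrix n n α) {s t : α}
    (hs : IsUnit (s • P - V)) (ht : IsUnit (t • P - V)) :
    (s • P - V)⁻¹ - (t • P - V)⁻¹ = (t - s) • ((s • P - V)⁻¹ * P * (t • P - V)⁻¹) := by
  rw [nonsing_inv_eq_ringInverse, nonsing_inv_eq_ringInverse,
    Ring.inverse_sub_inverse (iff_of_true hs ht), sub_sub_sub_cancel_right, ← sub_smul,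
    mul_smul_comm, smul_mul_assoc]

theorem smul_inv_mul_mul_smul_add_div_smul {𝕜 : Type*} [Field 𝕜] (P V : Matrix n n 𝕜) {s t : 𝕜}
    (ht : t ≠ 0) (hs : IsUnit (s • P - V)) (hst : IsUnit ((s + t) • P - V)) :
    s • ((s • P - V)⁻¹ * P) * (t • (((s + t) • P - V)⁻¹ * P)) +
        (s / t) • (t • (((s + t) • P - V)⁻¹ * P)) = s • ((s • P - V)⁻¹ * P) := by
  have hres := inv_smul_sub_sub_inv_smul_sub P V hs hst
  rw [add_sub_cancel_left, sub_eq_iff_eq_add'] at hres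
  rw [smul_smul, div_mul_cancel₀ _ ht, smul_mul_smul_comm, mul_smul, ← smul_add]
  conv_rhs => rw [hres, add_mul, smul_mul_assoc, mul_assoc, add_comm]

end Matrix

section Telescope

variable {𝕜 R : Type*} [CommSemiring 𝕜] [Semiring R] [Algebra 𝕜 R]

theorem mul_add_sum_smul_eq_prod_smul (W : R) (U : ℕ → ℕ → R) (r : ℕ → 𝕜)
    (hU0 : ∀ m, W * U m 0 + r m • U m 0 = W)
    (hU : ∀ m n, U m (n + 1) = r m • (U m 0 * U (m + 1) n)) (n : ℕ) :
    W * U 0 n + ∑ j ∈ range (n + 1), (∏ l ∈ range (j + 1), r l) • U j (n - j) =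
      (∏ l ∈ range n, r l) • W := by
  induction n generalizing U r with
  | zero => simpa using hU0 0
  | succ n ih =>
    have hhead : W * U 0 (n + 1) + r 0 • U 0 (n + 1) = r 0 • (W * U 1 n) := by
      calc W * U 0 (n + 1) + r 0 • U 0 (n + 1)
          = r 0 • ((W * U 0 0 + r 0 • U 0 0) * U 1 n) := by
            rw [hU]; simp only [mul_smul_comm, smul_add, add_mul, smul_mul_assoc, mul_assoc]
        _ = r 0 • (W * U 1 n) := by rw [hU0]
    have htail : ∀ j, (∏ l ∈ range (j + 1 + 1), r l) • U (j + 1) (n + 1 - (j + 1)) =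
        r 0 • ((∏ l ∈ range (j + 1), r (l + 1)) • U (j + 1) (n - j)) := fun j => by
      rw [prod_range_succ' _ (j + 1), Nat.add_sub_add_right, mul_comm, mul_smul]
    calc W * U 0 (n + 1) + ∑ j ∈ range (n + 1 + 1), (∏ l ∈ range (j + 1), r l) • U j (n + 1 - j)
        = (W * U 0 (n + 1) + r 0 • U 0 (n + 1)) +
            r 0 • ∑ j ∈ range (n + 1), (∏ l ∈ range (j + 1), r (l + 1)) • U (j + 1) (n - j) := by
          rw [sum_range_succ', sum_congr rfl fun j _ => htail j, ← smul_sum]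
          simp only [zero_add, range_one, prod_singleton, Nat.sub_zero]
          abel
      _ = r 0 • ((∏ l ∈ range n, r (l + 1)) • W) := by
          rw [hhead, ← smul_add, ih (fun m => U (m + 1)) (fun m => r (m + 1)) (fun m => hU0 _)
            (fun m => hU _)]
      _ = (∏ l ∈ range (n + 1), r l) • W := by rw [smul_smul, prod_range_succ' _ n, mul_comm]

end Telescope

theorem stmt_16_general {K : Type*} [Fintype K] [DecidableEq K]
    (IW : Matrix K K ℝ)
    (V R : Matrix K K ℝ)
    (lam : ℝ)
    (mu : ℕ → ℝ) (hmu : ∀ i, 1 ≤ i → 0 < mu i)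
    (hinv0 : IsUnit (lam • IW - V))
    (hinv : ∀ i, 1 ≤ i → IsUnit ((lam + mu i) • IW - V))
    (W : Matrix K K ℝ) (hW : W = lam • ((lam • IW - V)⁻¹ * IW))
    (U : ℕ → ℕ → Matrix K K ℝ)
    (hU0 : ∀ i, 1 ≤ i → U i 0 = mu i • (((lam + mu i) • IW - V)⁻¹ * IW))
    (hUs : ∀ i n, 1 ≤ i →
      U i (n + 1) = ((lam + mu i) • IW - V)⁻¹ * (lam • IW) * U (i + 1) n)
    (A : ℕ → ℕ → Matrix K K ℝ) (hA : ∀ i n, A i n = U i n * R)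
    (B : ℕ → Matrix K K ℝ) (hB : ∀ n, B n = W * U 1 n * R)
    (c : ℝ)
    (ξ : ℕ → ℝ) (hξ : ∀ n, ξ n = c * ∏ i ∈ Finset.Icc 1 n, lam / mu i)
    (θhat : K → ℝ)
    (hθhat : Matrix.vecMul θhat (lam • ((lam • IW - V)⁻¹ * IW * R)) = θhat) :
    ∀ n : ℕ,
      Matrix.vecMul (ξ 0 • θhat) (B n) +
        ∑ i ∈ Finset.Icc 1 (n + 1), Matrix.vecMul (ξ i • θhat) (A i (n + 1 - i))
      = ξ n • θhat := by
  intro n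
  have hU0' : ∀ m, W * U (m + 1) 0 + (lam / mu (m + 1)) • U (m + 1) 0 = W := fun m => by
    rw [hW, hU0 _ m.succ_pos]
    exact Matrix.smul_inv_mul_mul_smul_add_div_smul IW V (hmu _ m.succ_pos).ne' hinv0
      (hinv _ m.succ_pos)
  have hUs' : ∀ m n, U (m + 1) (n + 1) = (lam / mu (m + 1)) • (U (m + 1) 0 * U (m + 2) n) :=
    fun m n => by
      rw [hUs _ n m.succ_pos, hU0 _ m.succ_pos, ← smul_mul_assoc, smul_smul,
        div_mul_cancel₀ _ (hmu _ m.succ_pos).ne', mul_smul_comm, smul_mul_assoc]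
  have htel := mul_add_sum_smul_eq_prod_smul W (fun m n => U (m + 1) n)
    (fun m => lam / mu (m + 1)) hU0' hUs' n
  have hξ' : ∀ i, ξ i = c * ∏ l ∈ range i, lam / mu (l + 1) := fun i => by
    rw [hξ, range_eq_Ico, prod_Ico_add' (fun l => lam / mu l), Ico_add_one_right_eq_Icc]
  have hIcc : ∀ f : ℕ → K → ℝ, ∑ i ∈ Icc 1 (n + 1), f i = ∑ j ∈ range (n + 1), f (j + 1) :=
    fun f => by rw [range_eq_Ico, sum_Ico_add', zero_add, Ico_add_one_right_eq_Icc]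
  rw [hIcc]
  calc _ = c • Matrix.vecMul θhat ((W * U 1 n + ∑ j ∈ range (n + 1),
          (∏ l ∈ range (j + 1), lam / mu (l + 1)) • U (j + 1) (n - j)) * R) := by
        simp only [hB, hA, hξ', prod_range_zero, mul_one, Nat.add_sub_add_right, add_mul, sum_mul,
          smul_mul_assoc, Matrix.vecMul_add, Matrix.vecMul_sum, Matrix.vecMul_smul,
          Matrix.smul_vecMul, smul_add, smul_sum, smul_smul]
    _ = ξ n • θhat := by
        rw [htel, hξ' n, smul_mul_assoc, Matrix.vecMul_smul, hW, smul_mul_assoc, hθhat, smul_smul]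

/-- If θ̂ satisfies θ̂·λ·(λI_W − V)⁻¹·I_W·R = θ̂, then the product-form
vector π̂^(n) = ξ(n)·θ̂ with ξ(n) = c·∏_{i=1}^n λ/μ(i) solves the steady-state
equations of the Markov chain embedded at departure epochs:
ξ(0)·θ̂·B^(n) + Σ_{i=1}^{n+1} ξ(i)·θ̂·A^(i,n−i+1) = ξ(n)·θ̂. -/
theorem stmt_16 {K : Type*} [Fintype K] [DecidableEq K] [Nonempty K]
    (KW KB : Set K) [∀ k, Decidable (k ∈ KW)] (hKW : KW.Nonempty)
    (hpart : ∀ k : K, k ∈ KW ↔ k ∉ KB)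
    (IW : Matrix K K ℝ)
    (hIW : IW = Matrix.diagonal (fun k => if k ∈ KW then (1:ℝ) else 0))
    (V R : Matrix K K ℝ)
    (lam : ℝ) (hlam : 0 < lam)
    (mu : ℕ → ℝ) (hmu : ∀ i, 1 ≤ i → 0 < mu i)
    (hinv0 : IsUnit (lam • IW - V))
    (hinv : ∀ i, 1 ≤ i → IsUnit ((lam + mu i) • IW - V))
    (W : Matrix K K ℝ) (hW : W = lam • ((lam • IW - V)⁻¹ * IW))
    (U : ℕ → ℕ → Matrix K K ℝ)
    (hU0 : ∀ i, 1 ≤ i → U i 0 = mu i • (((lam + mu i) • IW - V)⁻¹ * IW))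
    (hUs : ∀ i n, 1 ≤ i →
      U i (n + 1) = ((lam + mu i) • IW - V)⁻¹ * (lam • IW) * U (i + 1) n)
    (A : ℕ → ℕ → Matrix K K ℝ) (hA : ∀ i n, A i n = U i n * R)
    (B : ℕ → Matrix K K ℝ) (hB : ∀ n, B n = W * U 1 n * R)
    (c : ℝ) (hc : 0 < c)
    (ξ : ℕ → ℝ) (hξ : ∀ n, ξ n = c * ∏ i ∈ Finset.Icc 1 n, lam / mu i)
    (θhat : K → ℝ)
    (hθhat : Matrix.vecMul θhat (lam • ((lam • IW - V)⁻¹ * IW * R)) = θhat) :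
    ∀ n : ℕ,
      Matrix.vecMul (ξ 0 • θhat) (B n) +
        ∑ i ∈ Finset.Icc 1 (n + 1), Matrix.vecMul (ξ i • θhat) (A i (n + 1 - i))
      = ξ n • θhat :=
  stmt_16_general IW V R lam mu hmu hinv0 hinv W hW U hU0 hUs A hA B hB c ξ hξ θhat hθhat
end

section
/- Let K be a nonempty finite set partitioned into a nonempty subset K_W and a subset K_B, V a generator matrix on K (nonnegative off-diagonal entries, rows summing to 0), and R a stochastic matrix on K (nonnegative entries, rows summing to 1). Assume I_W − V is invertible and define H := (I_W − V)^{-1}·I_W·R. Then every row of H sums to 1, i.e. H·e = e where e is the all-ones column vector. If in addition all entries of H are nonnegative (so that H is a stochastic matrix), then there exists a probability row vector θ̂ on K with θ̂·H = θ̂. -/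
open scoped Matrix


/-- For a generator V and a stochastic matrix R on a finite set K with
I_W − V invertible, every row of H = (I_W − V)⁻¹·I_W·R sums to 1; if moreover all
entries of H are nonnegative then H has a stationary probability vector θ̂. -/
theorem stmt_18 {K : Type*} [Fintype K] [DecidableEq K] [Nonempty K]
    (KW KB : Set K) [∀ k, Decidable (k ∈ KW)] (hKW : KW.Nonempty)
    (hpart : ∀ k : K, k ∈ KW ↔ k ∉ KB)
    (IW : Matrix K K ℝ)
    (hIW : IW = Matrix.diagonal (fun k => if k ∈ KW then (1:ℝ) else 0))
    (V : Matrix K K ℝ)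
    (hV_offdiag : ∀ k m, k ≠ m → 0 ≤ V k m) (hV_row : ∀ k, ∑ m, V k m = 0)
    (R : Matrix K K ℝ)
    (hR_nonneg : ∀ k m, 0 ≤ R k m) (hR_row : ∀ k, ∑ m, R k m = 1)
    (hinv : IsUnit (IW - V))
    (H : Matrix K K ℝ) (hH : H = (IW - V)⁻¹ * IW * R) :
    (∀ k, ∑ m, H k m = 1) ∧
    ((∀ k m, 0 ≤ H k m) →
      ∃ θhat : K → ℝ, (∀ k, 0 ≤ θhat k) ∧ (∑ k, θhat k = 1) ∧
        Matrix.vecMul θhat H = θhat) := by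
  have hdetu : IsUnit (IW - V).det := (Matrix.isUnit_iff_isUnit_det _).mp hinv
  have hR1 : R *ᵥ (fun _ => (1:ℝ)) = fun _ => 1 := by
    funext k; simp [Matrix.mulVec, dotProduct, hR_row k]
  have hV1 : V *ᵥ (fun _ => (1:ℝ)) = 0 := by
    funext k; simp [Matrix.mulVec, dotProduct, hV_row k]
  have hIV1 : (IW - V) *ᵥ (fun _ => (1:ℝ)) = IW *ᵥ (fun _ => 1) := by
    rw [Matrix.sub_mulVec, hV1, sub_zero]
  have hH1 : H *ᵥ (fun _ => (1:ℝ)) = fun _ => 1 := by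
    rw [hH, ← Matrix.mulVec_mulVec, hR1, ← Matrix.mulVec_mulVec, ← hIV1,
      Matrix.mulVec_mulVec, Matrix.nonsing_inv_mul _ hdetu, Matrix.one_mulVec]
  have hrow : ∀ k, ∑ m, H k m = 1 := by
    intro k
    have := congrFun hH1 k
    simpa [Matrix.mulVec, dotProduct] using this
  refine ⟨hrow, fun hHnn => ?_⟩
  -- H - 1 is singular
  have hdet : (H - 1).det = 0 := by
    rw [← Matrix.exists_mulVec_eq_zero_iff]
    refine ⟨fun _ => 1, fun h => one_ne_zero (congrFun h (Classical.arbitrary K)), ?_⟩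
    rw [Matrix.sub_mulVec, hH1, Matrix.one_mulVec]
    funext k; simp
  have hdetT : ((H - 1)ᵀ).det = 0 := by rw [Matrix.det_transpose]; exact hdet
  obtain ⟨v, hv0, hv⟩ := (Matrix.exists_mulVec_eq_zero_iff).mpr hdetT
  have hvfix : ∀ m, ∑ k, v k * H k m = v m := by
    intro m
    have h := congrFun hv m
    simp only [Matrix.mulVec, dotProduct, Matrix.transpose_apply, Matrix.sub_apply,
      Matrix.one_apply, Pi.zero_apply, sub_mul, mul_ite, ite_mul, one_mul, zero_mul,
      Finset.sum_sub_distrib, Finset.sum_ite_eq', Finset.mem_univ, if_true,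
      sub_eq_zero] at h
    rw [← h]
    exact Finset.sum_congr rfl fun k _ => mul_comm _ _
  set u : K → ℝ := fun k => |v k| with hu
  have hufix : ∀ m, ∑ k, u k * H k m = u m := by
    have hnn : ∀ m ∈ Finset.univ, (0:ℝ) ≤ ∑ k, u k * H k m - u m := by
      intro m _
      have h1 : u m ≤ ∑ k, u k * H k m := by
        calc u m = |∑ k, v k * H k m| := by rw [hvfix m]
        _ ≤ ∑ k, |v k * H k m| := Finset.abs_sum_le_sum_abs _ _
        _ = ∑ k, u k * H k m := by
            refine Finset.sum_congr rfl fun k _ => ?_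
            rw [abs_mul, abs_of_nonneg (hHnn k m)]
      linarith
    have hsum : ∑ m, (∑ k, u k * H k m - u m) = 0 := by
      rw [Finset.sum_sub_distrib, Finset.sum_comm]
      have : ∀ k, ∑ m, u k * H k m = u k := by
        intro k; rw [← Finset.mul_sum, hrow k, mul_one]
      simp [this]
    intro m
    have := (Finset.sum_eq_zero_iff_of_nonneg hnn).mp hsum m (Finset.mem_univ m)
    linarith
  have hS : 0 < ∑ k, u k := by
    obtain ⟨k, hk⟩ := Function.ne_iff.mp hv0
    exact Finset.sum_pos' (fun i _ => abs_nonneg _)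
      ⟨k, Finset.mem_univ k, abs_pos.mpr hk⟩
  refine ⟨fun k => u k / (∑ j, u j), fun k => div_nonneg (abs_nonneg _) hS.le, ?_, ?_⟩
  · rw [← Finset.sum_div, div_self hS.ne']
  · funext m
    simp only [Matrix.vecMul, dotProduct]
    have hst : ∑ x, (u x / ∑ j, u j) * H x m = (∑ x, u x * H x m) / (∑ j, u j) := by
      rw [Finset.sum_div]; exact Finset.sum_congr rfl fun k _ => by ring
    rw [hst, hufix m]
end
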